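/- arXiv:2509.11852 — 9 statements merged into one kernel-verified Lean document; each statement's English description precedes it below -/
import Mathlib

section
/- Let T be the bilateral weighted backward shift on c00(ℤ) with weights w(k) = 2 for k > 0 and w(k) = 1/2 for k ≤ 0, i.e. T((x_n))_n = 2x_{n+1} for n ≥ 0 and (1/2)x_{n+1} for n < 0. Then for every ε > 0, n ∈ ℕ, m ∈ ℕ and δ > 0, the sequence (x_j)_{j∈ℕ₀} defined by x_j(i) = ε·2^{-|i|} for m+1−j ≤ i ≤ m+1 and 0 otherwise, satisfies ‖T x_j − x_{j+1}‖_m < δ for all j whenever ε·2^{-m-1} < δ, and no point x ∈ c00(ℤ) satisfies ‖x_j − T^j x‖_n < ε for all j ∈ ℕ₀. -/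
/-- The seminorm `‖x‖_n = max_{|k| ≤ n} |x k|` on sequences over `ℤ`. -/
noncomputable def pn (n : ℕ) (x : ℤ → ℝ) : ℝ :=
  (Finset.Icc (-(n : ℤ)) n).sup' ⟨0, by simp⟩ (fun k => |x k|)

/-- The bilateral weighted backward shift with weights `w k = 2` for `k > 0` and
`w k = 1/2` for `k ≤ 0`, i.e. `(T x) n = 2 x(n+1)` for `n ≥ 0` and `(1/2) x(n+1)` for `n < 0`. -/
noncomputable def Tfun (x : ℤ → ℝ) : ℤ → ℝ :=
  fun n => (if 0 ≤ n then (2 : ℝ) else (1 / 2 : ℝ)) * x (n + 1)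

/-!
The sequence `u i = 2^{-|i|}` is a fixed point of `T`, and `x_j` is the truncation of `ε u` to
the window `[m+1-j, m+1]`. Applying `T` moves the window one step to the left, so `T x_j` and
`x_{j+1}` differ only at `m+1`, which `‖·‖_m` does not see. For shadowing, `x_j(0) = ε` as soon
as `j > m`, whereas `(T^j y)(0) = 2^j y(j)` vanishes for large `j` when `y` is finitely supported.
-/

open Filter

lemma pn_lt_iff {n : ℕ} {x : ℤ → ℝ} {c : ℝ} :
    pn n x < c ↔ ∀ k ∈ Finset.Icc (-(n : ℤ)) n, |x k| < c :=
  Finset.sup'_lt_iff _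

lemma abs_apply_le_pn {n : ℕ} {k : ℤ} (hk : k ∈ Finset.Icc (-(n : ℤ)) n) (x : ℤ → ℝ) :
    |x k| ≤ pn n x :=
  Finset.le_sup' (fun k => |x k|) hk

lemma Tfun_zpow_neg_abs : Tfun (fun i => (2 : ℝ) ^ (-|i|)) = fun i => 2 ^ (-|i|) := by
  funext i
  simp only [Tfun]
  rcases le_or_gt 0 i with hi | hi
  · rw [if_pos hi, abs_of_nonneg hi, abs_of_nonneg (by omega), neg_add, zpow_add₀ two_ne_zero,
      zpow_neg_one]
    ring
  · rw [if_neg hi.not_ge, abs_of_neg hi, abs_of_nonpos (by omega), neg_neg, neg_neg,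
      zpow_add_one₀ two_ne_zero]
    ring

lemma Tfun_iterate_apply_of_nonneg (y : ℤ → ℝ) (j : ℕ) {k : ℤ} (hk : 0 ≤ k) :
    (Tfun^[j] y) k = 2 ^ j * y (k + j) := by
  induction j generalizing k with
  | zero => simp
  | succ j ih =>
    rw [Function.iterate_succ_apply', Tfun, if_pos hk, ih (by omega), pow_succ]
    push_cast
    ring_nf

lemma eventually_Tfun_iterate_apply_zero {y : ℤ → ℝ} (hy : (Function.support y).Finite) :
    ∀ᶠ j in atTop, (Tfun^[j] y) 0 = 0 := by
  have hyj : ∀ᶠ j : ℕ in atTop, y j = 0 := by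
    rw [← Nat.cofinite_eq_atTop]
    exact (Nat.cast_injective.tendsto_cofinite.eventually hy.eventually_cofinite_notMem).mono
      fun j => Function.notMem_support.mp
  filter_upwards [hyj] with j hj
  rw [Tfun_iterate_apply_of_nonneg y j le_rfl, zero_add, hj, mul_zero]

section Pseudotrajectory

variable {ε : ℝ} {m : ℕ} {x : ℕ → ℤ → ℝ}
  (hx : ∀ (j : ℕ) (i : ℤ),
    x j i = if (m : ℤ) + 1 - (j : ℤ) ≤ i ∧ i ≤ (m : ℤ) + 1 then ε * (2 : ℝ) ^ (-|i|) else 0)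
include hx

lemma Tfun_pseudotrajectory_apply_of_le (j : ℕ) {i : ℤ} (hi : i ≤ m) :
    Tfun (x j) i = x (j + 1) i := by
  have hfix := congrFun Tfun_zpow_neg_abs i
  simp only [Tfun] at hfix ⊢
  generalize (if 0 ≤ i then (2 : ℝ) else 1 / 2) = w at hfix ⊢
  rw [hx, hx]
  push_cast
  split_ifs
  · rw [mul_left_comm, hfix]
  all_goals first | omega | simp

lemma pseudotrajectory_apply_zero {j : ℕ} (hj : m + 1 ≤ j) : x j 0 = ε := by
  rw [hx, if_pos (by omega)]
  simp

end Pseudotrajectory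

/-- The explicit pseudotrajectory `x_j(i) = ε 2^{-|i|}` for `m+1-j ≤ i ≤ m+1`, `0` otherwise,
is a `δ`-pseudotrajectory (w.r.t. `‖·‖_m`) whenever `ε 2^{-m-1} < δ`, and no finitely
supported point `‖·‖_n`-`ε`-shadows it. -/
theorem stmt1 (ε : ℝ) (hε : 0 < ε) (n m : ℕ) (δ : ℝ) (hδ : 0 < δ)
    (x : ℕ → ℤ → ℝ)
    (hx : ∀ (j : ℕ) (i : ℤ),
      x j i = if (m : ℤ) + 1 - (j : ℤ) ≤ i ∧ i ≤ (m : ℤ) + 1 then ε * (2 : ℝ) ^ (-|i|) else 0) :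
    (ε * (2 : ℝ) ^ (-((m : ℤ) + 1)) < δ → ∀ j : ℕ, pn m (Tfun (x j) - x (j + 1)) < δ) ∧
    ¬ ∃ y : ℤ → ℝ, (Function.support y).Finite ∧ ∀ j : ℕ, pn n (x j - Tfun^[j] y) < ε := by
  constructor
  · intro _ j
    refine pn_lt_iff.mpr fun k hk => ?_
    rw [Pi.sub_apply, Tfun_pseudotrajectory_apply_of_le hx j (Finset.mem_Icc.mp hk).2, sub_self,
      abs_zero]
    exact hδ
  · rintro ⟨y, hy, hshadow⟩
    obtain ⟨j, hj, hyj⟩ :=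
      ((eventually_ge_atTop (m + 1)).and (eventually_Tfun_iterate_apply_zero hy)).exists
    have hle := abs_apply_le_pn (n := n) (k := 0) (by simp) (x j - Tfun^[j] y)
    rw [Pi.sub_apply, pseudotrajectory_apply_zero hx hj, hyj, sub_zero, abs_of_pos hε] at hle
    exact (hshadow j).not_ge hle
end

section
/- The bilateral weighted backward shift T on c00(ℤ) with weights w(k) = 2 for k > 0 and w(k) = 1/2 for k ≤ 0 does not have the positive shadowing property with respect to the family of seminorms ‖x‖_n = max_{|k|≤n}|x(k)|. -/
lemma Tfun_iter (j : ℕ) : ∀ (y : ℤ → ℝ) (n : ℤ), 0 ≤ n →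
    Tfun^[j] y n = 2 ^ j * y (n + j) := by
  induction j with
  | zero => intro y n _; simp
  | succ j ih =>
      intro y n hn
      rw [Function.iterate_succ_apply']
      show (if 0 ≤ n then (2:ℝ) else (1/2)) * Tfun^[j] y (n + 1) = _
      rw [if_pos hn, ih y (n + 1) (by omega)]
      push_cast
      ring_nf

lemma pn_zero (f : ℤ → ℝ) : pn 0 f = |f 0| := by
  simp [pn]

/-- `T` does not have the positive shadowing property on `c₀₀(ℤ)` with respect to the
family of seminorms `‖·‖_n` (neighbourhoods of `0` are described via the basic
seminorm-balls). -/
theorem stmt2 :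
    ¬ (∀ (n : ℕ) (ε : ℝ), 0 < ε → ∃ (m : ℕ) (δ : ℝ), 0 < δ ∧
        ∀ x : ℕ → ℤ → ℝ, (∀ j, (Function.support (x j)).Finite) →
          (∀ j : ℕ, pn m (Tfun (x j) - x (j + 1)) < δ) →
          ∃ y : ℤ → ℝ, (Function.support y).Finite ∧
            ∀ j : ℕ, pn n (x j - Tfun^[j] y) < ε) := by
  intro h
  obtain ⟨m, δ, hδ, H⟩ := h 0 (1/2) (by norm_num)
  set M : ℤ := (m : ℤ) + 1 with hM
  set x : ℤ → ℝ := fun k => if |k| ≤ M then (2:ℝ) ^ (-|k|) else 0 with hx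
  have hsupp : (Function.support x).Finite := by
    apply Set.Finite.subset (Set.finite_Icc (-M) M)
    intro k hk
    simp only [Function.mem_support, hx] at hk
    by_contra hc
    simp only [Set.mem_Icc, not_and_or, not_le] at hc
    apply hk
    have habs : M < |k| := by rcases abs_cases k with ⟨h',_⟩ | ⟨h',_⟩ <;> omega
    rw [if_neg (not_le.mpr habs)]
  have hkey : ∀ k : ℤ, -(m:ℤ) ≤ k → k ≤ m → Tfun x k = x k := by
    intro k h1 h2
    show (if 0 ≤ k then (2:ℝ) else (1/2)) * x (k+1) = x k
    by_cases hk : 0 ≤ k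
    · rw [if_pos hk, hx]
      simp only []
      rw [if_pos (by rw [abs_of_nonneg (by omega : (0:ℤ) ≤ k + 1)]; omega),
          if_pos (by rw [abs_of_nonneg hk]; omega),
          abs_of_nonneg (by omega : (0:ℤ) ≤ k + 1), abs_of_nonneg hk]
      rw [show -(k+1) = -k + (-1) by ring, zpow_add₀ (by norm_num : (2:ℝ) ≠ 0)]
      simp only [zpow_neg_one]
      ring
    · rw [if_neg hk, hx]
      simp only []
      rw [if_pos (by rw [abs_of_nonpos (by omega : k + 1 ≤ 0)]; omega),
          if_pos (by rw [abs_of_nonpos (by omega : k ≤ 0)]; omega),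
          abs_of_nonpos (by omega : k + 1 ≤ 0), abs_of_nonpos (by omega : k ≤ 0)]
      rw [neg_neg, neg_neg, zpow_add₀ (by norm_num : (2:ℝ) ≠ 0)]
      simp only [zpow_one]
      ring
  obtain ⟨y, hy, hsh⟩ := H (fun _ => x) (fun _ => hsupp) (by
    intro j
    have : pn m (Tfun x - x) ≤ 0 := by
      apply Finset.sup'_le
      intro k hk
      simp only [Finset.mem_Icc] at hk
      have := hkey k hk.1 hk.2
      simp [Pi.sub_apply, this]
    linarith)
  -- y has finite support: pick j beyond it
  have hbdd := hy.bddAbove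
  obtain ⟨b, hb⟩ := hbdd
  set j : ℕ := (b.toNat + 1) with hj
  have hyj : y (0 + (j : ℤ)) = 0 := by
    by_contra hc
    have : (0 + (j:ℤ)) ∈ Function.support y := hc
    have := hb this
    simp only [hj] at this
    omega
  have hiter : Tfun^[j] y 0 = 0 := by
    rw [Tfun_iter j y 0 le_rfl, hyj, mul_zero]
  have hx0 : x 0 = 1 := by
    show (if |(0:ℤ)| ≤ M then (2:ℝ) ^ (-|(0:ℤ)|) else 0) = 1
    rw [abs_zero, if_pos (by omega : (0:ℤ) ≤ M)]
    simp
  have := hsh j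
  have hpn : pn 0 ((fun _ => x) j - Tfun^[j] y) = 1 := by
    rw [pn_zero]
    simp only [Pi.sub_apply]
    rw [hiter, hx0]
    norm_num
  rw [hpn] at this
  linarith
end

section
/- The bilateral weighted backward shift T on c00(ℤ) with weights w(k) = 2 for k > 0 and w(k) = 1/2 for k ≤ 0 is generalized hyperbolic with respect to the decomposition M = closed span{e_n : n ≤ 0} and N = closed span{e_n : n > 0}. -/
/-- The inverse of `Tfun` (restricted to `N`): `(S x) n = (1/2) x(n-1)` for `n ≥ 1`,
`2 x(n-1)` for `n ≤ 0`. -/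
noncomputable def Sfun (x : ℤ → ℝ) : ℤ → ℝ :=
  fun n => (if 1 ≤ n then (1 / 2 : ℝ) else (2 : ℝ)) * x (n - 1)

/-- `M` = (closed) span of `{e_i : i ≤ 0}` in `c₀₀(ℤ)`. -/
def Mset : Set (ℤ → ℝ) :=
  {x | (Function.support x).Finite ∧ ∀ i : ℤ, 0 < i → x i = 0}

/-- `N` = (closed) span of `{e_i : i > 0}` in `c₀₀(ℤ)`. -/
def Nset : Set (ℤ → ℝ) :=
  {x | (Function.support x).Finite ∧ ∀ i : ℤ, i ≤ 0 → x i = 0}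


lemma le_pn {k : ℕ} {m : ℤ} (hm : m ∈ Finset.Icc (-(k:ℤ)) k) (x : ℤ → ℝ) :
    |x m| ≤ pn k x := Finset.le_sup' (fun j => |x j|) hm

lemma pn_nonneg (k : ℕ) (x : ℤ → ℝ) : 0 ≤ pn k x := by
  have h : (0:ℤ) ∈ Finset.Icc (-(k:ℤ)) k := by simp
  exact le_trans (abs_nonneg _) (le_pn h x)

lemma pn_le {k : ℕ} {x : ℤ → ℝ} {b : ℝ} (h : ∀ m ∈ Finset.Icc (-(k:ℤ)) k, |x m| ≤ b) :
    pn k x ≤ b := Finset.sup'_le _ _ h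

lemma TSid (x : ℤ → ℝ) : Tfun (Sfun x) = x := by
  funext n
  simp only [Tfun, Sfun, add_sub_cancel_right]
  by_cases h : 0 ≤ n
  · rw [if_pos h, if_pos (by omega), ]; ring
  · rw [if_neg h, if_neg (by omega)]; ring

lemma STid (x : ℤ → ℝ) : Sfun (Tfun x) = x := by
  funext n
  simp only [Tfun, Sfun, sub_add_cancel]
  by_cases h : 1 ≤ n
  · rw [if_pos h, if_pos (by omega)]; ring
  · rw [if_neg h, if_neg (by omega)]; ring

lemma TM_mem {y : ℤ → ℝ} (hy : y ∈ Mset) : Tfun y ∈ Mset := by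
  obtain ⟨hfin, hz⟩ := hy
  constructor
  · apply (hfin.image (fun i => i - 1)).subset
    intro n hn
    have : y (n+1) ≠ 0 := by
      intro h; apply hn; simp [Tfun, h]
    exact ⟨n+1, this, by ring⟩
  · intro i hi
    simp only [Tfun]
    rw [hz (i+1) (by omega)]; ring

lemma SN_mem {z : ℤ → ℝ} (hz : z ∈ Nset) : Sfun z ∈ Nset := by
  obtain ⟨hfin, hz0⟩ := hz
  constructor
  · apply (hfin.image (fun i => i + 1)).subset
    intro n hn
    have : z (n-1) ≠ 0 := by
      intro h; apply hn; simp [Sfun, h]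
    exact ⟨n-1, this, by ring⟩
  · intro i hi
    simp only [Sfun]
    rw [hz0 (i-1) (by omega)]; ring

lemma TM_pn {y : ℤ → ℝ} (hy : y ∈ Mset) (k : ℕ) :
    pn k (Tfun y) ≤ (1/2) * pn k y := by
  apply pn_le
  intro m hm
  simp only [Finset.mem_Icc] at hm
  by_cases h : 0 ≤ m
  · have : Tfun y m = 0 := by
      simp only [Tfun]; rw [hy.2 (m+1) (by omega)]; ring
    rw [this, abs_zero]
    nlinarith [pn_nonneg k y]
  · have : Tfun y m = (1/2) * y (m+1) := by simp [Tfun, h]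
    rw [this, abs_mul, abs_of_nonneg (by norm_num : (0:ℝ) ≤ 1/2)]
    have := le_pn (k := k) (m := m+1) (by simp [Finset.mem_Icc]; omega) y
    nlinarith [abs_nonneg (y (m+1))]

lemma SN_pn {z : ℤ → ℝ} (hz : z ∈ Nset) (k : ℕ) :
    pn k (Sfun z) ≤ (1/2) * pn k z := by
  apply pn_le
  intro m hm
  simp only [Finset.mem_Icc] at hm
  by_cases h : m ≤ 1
  · have : Sfun z m = 0 := by
      simp only [Sfun]; rw [hz.2 (m-1) (by omega)]; ring
    rw [this, abs_zero]
    nlinarith [pn_nonneg k z]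
  · have : Sfun z m = (1/2) * z (m-1) := by
      simp only [Sfun]; rw [if_pos (by omega)]
    rw [this, abs_mul, abs_of_nonneg (by norm_num : (0:ℝ) ≤ 1/2)]
    have := le_pn (k := k) (m := m-1) (by simp [Finset.mem_Icc]; omega) z
    nlinarith [abs_nonneg (z (m-1))]

lemma TM_iter {y : ℤ → ℝ} (hy : y ∈ Mset) (k : ℕ) : ∀ n : ℕ,
    Tfun^[n] y ∈ Mset ∧ pn k (Tfun^[n] y) ≤ (1/2)^n * pn k y := by
  intro n
  induction n with
  | zero => simpa using hy
  | succ n ih =>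
    rw [Function.iterate_succ_apply']
    refine ⟨TM_mem ih.1, ?_⟩
    calc pn k (Tfun (Tfun^[n] y)) ≤ (1/2) * pn k (Tfun^[n] y) := TM_pn ih.1 k
    _ ≤ (1/2) * ((1/2)^n * pn k y) := by nlinarith [ih.2]
    _ = (1/2)^(n+1) * pn k y := by ring

lemma SN_iter {z : ℤ → ℝ} (hz : z ∈ Nset) (k : ℕ) : ∀ n : ℕ,
    Sfun^[n] z ∈ Nset ∧ pn k (Sfun^[n] z) ≤ (1/2)^n * pn k z := by
  intro n
  induction n with
  | zero => simpa using hz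
  | succ n ih =>
    rw [Function.iterate_succ_apply']
    refine ⟨SN_mem ih.1, ?_⟩
    calc pn k (Sfun (Sfun^[n] z)) ≤ (1/2) * pn k (Sfun^[n] z) := SN_pn ih.1 k
    _ ≤ (1/2) * ((1/2)^n * pn k z) := by nlinarith [ih.2]
    _ = (1/2)^(n+1) * pn k z := by ring

/-- `T` is generalized hyperbolic on `c₀₀(ℤ)` with respect to the decomposition
`M ⊕ N`: the decomposition is a topological direct sum, `T(M) ⊆ M`, `T(N) ⊇ N` with
`T|_N` an isomorphism onto `T(N)` whose inverse is `S`, and the dichotomy estimates hold. -/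
theorem stmt3 :
    -- X = M ⊕ N algebraically
    (∀ x : ℤ → ℝ, (Function.support x).Finite →
      ∃! yz : (ℤ → ℝ) × (ℤ → ℝ), yz.1 ∈ Mset ∧ yz.2 ∈ Nset ∧ x = yz.1 + yz.2) ∧
    -- the direct sum is topological: the projections are seminorm-bounded
    (∀ x y z : ℤ → ℝ, y ∈ Mset → z ∈ Nset → x = y + z →
      ∀ k : ℕ, pn k y ≤ pn k x ∧ pn k z ≤ pn k x) ∧
    -- T(M) ⊆ M
    (∀ y ∈ Mset, Tfun y ∈ Mset) ∧
    -- T(N) ⊇ N and T|_N is injective with inverse S on N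
    (∀ z ∈ Nset, Sfun z ∈ Nset ∧ Tfun (Sfun z) = z) ∧
    (∀ z ∈ Nset, ∀ z' ∈ Nset, Tfun z = Tfun z' → z = z') ∧
    (∀ z ∈ Nset, Sfun (Tfun z) = z) ∧
    -- the hyperbolicity estimates
    (∀ k : ℕ, ∃ (l : ℕ) (c t : ℝ), 0 < c ∧ 0 < t ∧ t < 1 ∧
      ∀ nn : ℕ,
        (∀ y ∈ Mset, pn k (Tfun^[nn] y) ≤ c * t ^ nn * pn l y) ∧
        (∀ z ∈ Nset, pn k (Sfun^[nn] z) ≤ c * t ^ nn * pn l z)) := by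
  refine ⟨?_, ?_, ?_, ?_, ?_, ?_, ?_⟩
  · -- algebraic decomposition
    intro x hx
    refine ⟨(fun i => if 0 < i then 0 else x i, fun i => if 0 < i then x i else 0),
      ⟨⟨?_, ?_⟩, ⟨?_, ?_⟩, ?_⟩, ?_⟩
    · apply hx.subset
      intro i hi
      simp only [Function.mem_support] at hi ⊢
      intro h; apply hi; simp [h]
    · intro i hi; simp [hi]
    · apply hx.subset
      intro i hi
      simp only [Function.mem_support] at hi ⊢
      intro h; apply hi; simp [h]
    · intro i hi; simp [not_lt.mpr hi]
    · funext i
      by_cases h : 0 < i <;> simp [h]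
    · rintro ⟨y, z⟩ ⟨⟨_, hyM⟩, ⟨_, hzN⟩, hsum⟩
      have hx' : ∀ i, x i = y i + z i := fun i => congrFun hsum i
      refine Prod.ext ?_ ?_ <;> funext i <;> by_cases h : 0 < i <;>
        simp only [h, if_pos, if_neg, if_true, if_false]
      · exact hyM i h
      · have h0 : z i = 0 := hzN i (not_lt.mp h)
        have := hx' i; rw [h0] at this; linarith
      · have h0 : y i = 0 := hyM i h
        have := hx' i; rw [h0] at this; linarith
      · exact hzN i (not_lt.mp h)
  · -- projections bounded
    intro x y z hy hz hsum k
    have hx' : ∀ i, x i = y i + z i := fun i => congrFun hsum i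
    constructor
    · apply pn_le
      intro m hm
      by_cases h : 0 < m
      · rw [hy.2 m h, abs_zero]; exact pn_nonneg k x
      · have : y m = x m := by rw [hx' m, hz.2 m (not_lt.mp h)]; ring
        rw [this]; exact le_pn hm x
    · apply pn_le
      intro m hm
      by_cases h : 0 < m
      · have : z m = x m := by rw [hx' m, hy.2 m h]; ring
        rw [this]; exact le_pn hm x
      · rw [hz.2 m (not_lt.mp h), abs_zero]; exact pn_nonneg k x
  · exact fun y hy => TM_mem hy
  · exact fun z hz => ⟨SN_mem hz, TSid z⟩
  · intro z _ z' _ h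
    have := congrArg Sfun h
    rwa [STid, STid] at this
  · exact fun z _ => STid z
  · intro k
    refine ⟨k, 1, 1/2, one_pos, by norm_num, by norm_num, fun nn => ⟨?_, ?_⟩⟩
    · intro y hy
      have := (TM_iter hy k nn).2
      linarith
    · intro z hz
      have := (SN_iter hz k nn).2
      linarith
end

section
/- Let X be c0(ℤ) or ℓp(ℤ) with 1 ≤ p < ∞, and let F_w be an invertible bilateral weighted forward shift on X. Then F_w is uniformly topologically expansive if and only if there exists a decomposition ℤ = I₊ ∪ I₋ such that |w_{i+n-1} ⋯ w_i| → ∞ uniformly for i ∈ I₊ as n → ∞, and |w_{i-n} ⋯ w_{i-1}|^{-1} → ∞ uniformly for i ∈ I₋ as n → ∞. -/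
open Finset

/-- `ℓᵖ(ℤ)`. -/
abbrev LpZ (p : ENNReal) := lp (fun _ : ℤ => ℝ) p

/-- `c₀(ℤ)`. -/
abbrev C0Z := ZeroAtInftyContinuousMap ℤ ℝ

/-- An invertible operator `T` on a normed space is uniformly topologically expansive
if the unit sphere decomposes as `A ∪ B` with `‖Tⁿx‖ → ∞` uniformly on `A` and
`‖T⁻ⁿx‖ → ∞` uniformly on `B`. -/
def UnifTopExpansive {X : Type*} [NormedAddCommGroup X] [NormedSpace ℝ X]
    (T : X ≃L[ℝ] X) : Prop :=
  ∃ A B : Set X, A ∪ B = {x : X | ‖x‖ = 1} ∧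
    (∀ M : ℝ, ∃ N : ℕ, ∀ n ≥ N, ∀ x ∈ A, M ≤ ‖((T : X →L[ℝ] X) ^ n) x‖) ∧
    (∀ M : ℝ, ∃ N : ℕ, ∀ n ≥ N, ∀ x ∈ B, M ≤ ‖((T.symm : X →L[ℝ] X) ^ n) x‖)

/-- There is a decomposition `ℤ = I₊ ∪ I₋` with `|w_{i+n-1} ⋯ w_i| → ∞` uniformly on `I₊`
and `|w_{i-n} ⋯ w_{i-1}|⁻¹ → ∞` uniformly on `I₋`. -/
def WeightDecomp (w : ℤ → ℝ) : Prop :=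
  ∃ Ip Im : Set ℤ, Ip ∪ Im = Set.univ ∧
    (∀ M : ℝ, ∃ N : ℕ, ∀ n ≥ N, ∀ i ∈ Ip, M ≤ |∏ j ∈ Finset.range n, w (i + j)|) ∧
    (∀ M : ℝ, ∃ N : ℕ, ∀ n ≥ N, ∀ i ∈ Im, M ≤ |∏ j ∈ Finset.range n, w (i - 1 - j)|⁻¹)

/-! On both spaces `F_wⁿ eᵢ = (wᵢ ⋯ w_{i+n-1}) e_{i+n}` and
`F_w⁻ⁿ eᵢ = (w_{i-n} ⋯ w_{i-1})⁻¹ e_{i-n}`, so `I₊ = {i | eᵢ ∈ A}` and `I₋ = {i | eᵢ ∈ B}`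
witness the weight condition. Conversely, every unit vector carries half of its norm (of
`∑ |xᵢ|ᵖ` in `ℓᵖ`, at a single coordinate in `c₀`) either on `I₊` or on its complement, which
lies in `I₋`; sorting unit vectors into `A` and `B` accordingly, the growth of the weight products
on that part bounds `‖F_w^{±n} x‖` from below. -/

def weightProd (w : ℤ → ℝ) (n : ℕ) (i : ℤ) : ℝ := ∏ j ∈ range n, w (i + j)

lemma weightProd_succ (w : ℤ → ℝ) (n : ℕ) (i : ℤ) :
    weightProd w (n + 1) i = w i * weightProd w n (i + 1) := by
  simp only [weightProd, prod_range_succ', Nat.cast_zero, add_zero, Nat.cast_succ]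
  rw [mul_comm]
  congr 1
  exact prod_congr rfl fun j _ => by rw [add_assoc, add_comm (j : ℤ)]

lemma prod_range_sub_eq_weightProd (w : ℤ → ℝ) (n : ℕ) (i : ℤ) :
    ∏ j ∈ range n, w (i - 1 - j) = weightProd w n (i - n) := by
  rw [weightProd, ← prod_range_reflect]
  refine prod_congr rfl fun j hj => congrArg w ?_
  rw [mem_range] at hj
  omega

lemma weightProd_ne_zero {w : ℤ → ℝ} (hw : ∀ n, w n ≠ 0) (n : ℕ) (i : ℤ) :
    weightProd w n i ≠ 0 :=
  prod_ne_zero_iff.mpr fun _ _ => hw _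

lemma ContinuousLinearEquiv.pow_apply_symm_pow_apply {R M : Type*} [Semiring R]
    [TopologicalSpace M] [AddCommMonoid M] [Module R M] (T : M ≃L[R] M) (n : ℕ) (x : M) :
    ((T : M →L[R] M) ^ n) (((T.symm : M →L[R] M) ^ n) x) = x := by
  induction n with
  | zero => rfl
  | succ n ih =>
    rw [pow_succ, pow_succ', mul_apply_eq_comp, mul_apply_eq_comp, ContinuousLinearEquiv.coe_coe,
      ContinuousLinearEquiv.coe_coe, T.apply_symm_apply, ih]

section WeightedShift

variable {X : Type*} [NormedAddCommGroup X] [NormedSpace ℝ X]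

def IsWeightedShift (coord : X →ₗ[ℝ] ℤ → ℝ) (w : ℤ → ℝ) (T : X ≃L[ℝ] X) : Prop :=
  ∀ x n, coord (T x) n = w (n - 1) * coord x (n - 1)

/-- "`x` carries at least half of its norm on `s`", in the form in which the lower bounds
for `‖Tⁿ x‖` and `‖T⁻ⁿ x‖` use it. -/
def IsHalfConcentratedOn (coord : X →ₗ[ℝ] ℤ → ℝ) (s : Set ℤ) (x : X) : Prop :=
  ∀ (y : X) (k : ℤ) (M : ℝ), 0 ≤ M →
    (∀ i ∈ s, M * |coord x i| ≤ |coord y (i + k)|) → M / 2 ≤ ‖y‖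

variable {coord : X →ₗ[ℝ] ℤ → ℝ} {w : ℤ → ℝ} {T : X ≃L[ℝ] X} {u : ℤ → X}

namespace IsWeightedShift

lemma coord_pow_apply (hT : IsWeightedShift coord w T) (n : ℕ) (x : X) (i : ℤ) :
    coord (((T : X →L[ℝ] X) ^ n) x) (i + n) = weightProd w n i * coord x i := by
  induction n generalizing x i with
  | zero => simp [weightProd]
  | succ n ih =>
    have hi : i + ((n + 1 : ℕ) : ℤ) = i + 1 + n := by push_cast; ring
    rw [pow_succ, mul_apply_eq_comp, ContinuousLinearEquiv.coe_coe, hi, ih,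
      hT, add_sub_cancel_right, weightProd_succ]
    ring

lemma weight_ne_zero (hT : IsWeightedShift coord w T) (hu : ∀ i, coord (u i) = Pi.single i 1)
    (n : ℤ) : w n ≠ 0 := by
  have h := hT (T.symm (u (n + 1))) (n + 1)
  rw [T.apply_symm_apply, hu, add_sub_cancel_right, Pi.single_eq_same] at h
  exact left_ne_zero_of_mul (h ▸ one_ne_zero)

lemma coord_symm_pow_apply (hT : IsWeightedShift coord w T) (hw : ∀ n, w n ≠ 0)
    (n : ℕ) (x : X) (i : ℤ) :
    coord (((T.symm : X →L[ℝ] X) ^ n) x) i = (weightProd w n i)⁻¹ * coord x (i + n) := by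
  conv_rhs => rw [← T.pow_apply_symm_pow_apply n x, hT.coord_pow_apply]
  rw [inv_mul_cancel_left₀ (weightProd_ne_zero hw n i)]

section Basis

variable (hinj : Function.Injective coord) (hu : ∀ i, coord (u i) = Pi.single i 1)
include hinj hu

lemma eq_smul_of_coord_eq_single {x : X} {j : ℤ} {a : ℝ} (h : coord x = Pi.single j a) :
    x = a • u j :=
  hinj (by rw [h, map_smul, hu, ← Pi.single_smul', smul_eq_mul, mul_one])

lemma pow_apply_basis (hT : IsWeightedShift coord w T) (n : ℕ) (i : ℤ) :
    ((T : X →L[ℝ] X) ^ n) (u i) = weightProd w n i • u (i + n) := by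
  refine eq_smul_of_coord_eq_single hinj hu (funext fun m => ?_)
  obtain ⟨k, rfl⟩ : ∃ k : ℤ, m = k + n := ⟨m - n, by ring⟩
  rw [hT.coord_pow_apply, hu]
  by_cases hk : k = i <;> simp [hk]

lemma symm_pow_apply_basis (hT : IsWeightedShift coord w T) (n : ℕ) (i : ℤ) :
    ((T.symm : X →L[ℝ] X) ^ n) (u i) = (weightProd w n (i - n))⁻¹ • u (i - n) := by
  refine eq_smul_of_coord_eq_single hinj hu (funext fun m => ?_)
  rw [hT.coord_symm_pow_apply (hT.weight_ne_zero hu), hu]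
  by_cases hm : m = i - n
  · simp [hm]
  · have : m + n ≠ i := fun h => hm (by omega)
    simp [hm, this]

lemma weightDecomp_of_unifTopExpansive (hT : IsWeightedShift coord w T)
    (hu1 : ∀ i, ‖u i‖ = 1) (hexp : UnifTopExpansive T) : WeightDecomp w := by
  obtain ⟨A, B, hAB, hA, hB⟩ := hexp
  refine ⟨{i | u i ∈ A}, {i | u i ∈ B}, ?_, fun M => ?_, fun M => ?_⟩
  · exact Set.eq_univ_of_forall fun i => (hAB ▸ hu1 i : u i ∈ A ∪ B)
  · obtain ⟨N, hN⟩ := hA M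
    refine ⟨N, fun n hn i hi => ?_⟩
    have h := hN n hn (u i) hi
    rwa [hT.pow_apply_basis hinj hu, norm_smul, hu1, mul_one, Real.norm_eq_abs] at h
  · obtain ⟨N, hN⟩ := hB M
    refine ⟨N, fun n hn i hi => ?_⟩
    have h := hN n hn (u i) hi
    rwa [hT.symm_pow_apply_basis hinj hu, norm_smul, hu1, mul_one, norm_inv, Real.norm_eq_abs,
      ← prod_range_sub_eq_weightProd] at h

end Basis

lemma unifTopExpansive_of_weightDecomp (hT : IsWeightedShift coord w T) (hw : ∀ n, w n ≠ 0)
    (hsplit : ∀ (s : Set ℤ) (x : X), ‖x‖ = 1 →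
      IsHalfConcentratedOn coord s x ∨ IsHalfConcentratedOn coord sᶜ x)
    (hdec : WeightDecomp w) : UnifTopExpansive T := by
  obtain ⟨Ip, Im, hU, hP, hQ⟩ := hdec
  refine ⟨{x | ‖x‖ = 1 ∧ IsHalfConcentratedOn coord Ip x},
    {x | ‖x‖ = 1 ∧ IsHalfConcentratedOn coord Ipᶜ x}, ?_, fun M => ?_, fun M => ?_⟩
  · ext x
    simp only [Set.mem_union, Set.mem_ofPred_eq]
    exact ⟨by rintro (⟨hx, -⟩ | ⟨hx, -⟩) <;> exact hx,
      fun hx => (hsplit Ip x hx).imp (⟨hx, ·⟩) (⟨hx, ·⟩)⟩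
  · obtain ⟨N, hN⟩ := hP (2 * |M|)
    refine ⟨N, fun n hn x ⟨_, hx⟩ => ?_⟩
    calc M ≤ 2 * |M| / 2 := by linarith [le_abs_self M]
      _ ≤ _ := hx _ n _ (by positivity) fun i hi => by
        rw [hT.coord_pow_apply, abs_mul]
        exact mul_le_mul_of_nonneg_right (hN n hn i hi) (abs_nonneg _)
  · obtain ⟨N, hN⟩ := hQ (2 * |M|)
    refine ⟨N, fun n hn x ⟨_, hx⟩ => ?_⟩
    calc M ≤ 2 * |M| / 2 := by linarith [le_abs_self M]
      _ ≤ _ := hx _ (-n) _ (by positivity) fun i hi => by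
        have hiIm : i ∈ Im := ((hU ▸ Set.mem_univ i : i ∈ Ip ∪ Im)).resolve_left hi
        rw [← sub_eq_add_neg, hT.coord_symm_pow_apply hw, sub_add_cancel, abs_mul, abs_inv,
          ← prod_range_sub_eq_weightProd]
        exact mul_le_mul_of_nonneg_right (hN n hn i hiIm) (abs_nonneg _)

theorem unifTopExpansive_iff (hT : IsWeightedShift coord w T) (hinj : Function.Injective coord)
    (hu : ∀ i, coord (u i) = Pi.single i 1) (hu1 : ∀ i, ‖u i‖ = 1)
    (hsplit : ∀ (s : Set ℤ) (x : X), ‖x‖ = 1 →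
      IsHalfConcentratedOn coord s x ∨ IsHalfConcentratedOn coord sᶜ x) :
    UnifTopExpansive T ↔ WeightDecomp w :=
  ⟨hT.weightDecomp_of_unifTopExpansive hinj hu hu1,
    hT.unifTopExpansive_of_weightDecomp (hT.weight_ne_zero hu) hsplit⟩

end IsWeightedShift

end WeightedShift

section LpSpace

variable (p : ENNReal)

def lpCoord : LpZ p →ₗ[ℝ] ℤ → ℝ where
  toFun x := x
  map_add' := lp.coeFn_add
  map_smul' := lp.coeFn_smul

lemma lpCoord_injective : Function.Injective (lpCoord p) := fun _ _ h => lp.ext h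

variable [Fact (1 ≤ p)]

lemma norm_lpSingle (i : ℤ) : ‖(lp.single p i 1 : LpZ p)‖ = 1 := by
  rw [lp.norm_single (zero_lt_one.trans_le Fact.out), norm_one]

variable {p}

lemma lp_half_le_tsum_or_compl (hp : p ≠ ⊤) {x : LpZ p} (hx : ‖x‖ = 1) (s : Set ℤ) :
    1 / 2 ≤ ∑' i : s, ‖x i‖ ^ p.toReal ∨ 1 / 2 ≤ ∑' i : ↑sᶜ, ‖x i‖ ^ p.toReal := by
  have hq : 0 < p.toReal := ENNReal.toReal_pos (zero_lt_one.trans_le Fact.out).ne' hp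
  have hsum := (lp.hasSum_norm hq x).summable
  have htot := (hsum.subtype s).tsum_add_tsum_compl (hsum.subtype sᶜ)
  rw [← lp.norm_rpow_eq_tsum hq, hx, Real.one_rpow] at htot
  by_contra! h
  linarith [h.1, h.2]

lemma lp_isHalfConcentratedOn (hp : p ≠ ⊤) {x : LpZ p} {s : Set ℤ}
    (hs : 1 / 2 ≤ ∑' i : s, ‖x i‖ ^ p.toReal) : IsHalfConcentratedOn (lpCoord p) s x := by
  intro y k M hM hdom
  have hq : 1 ≤ p.toReal := by simpa using ENNReal.toReal_mono hp (Fact.out : 1 ≤ p)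
  have hq0 : 0 < p.toReal := zero_lt_one.trans_le hq
  have hx := (lp.hasSum_norm hq0 x).summable.subtype s
  have hy := (lp.hasSum_norm hq0 y).summable
  have hshift : Function.Injective fun i : s => (i : ℤ) + k :=
    fun i j h => Subtype.ext (add_right_cancel h)
  have htwo : (2 : ℝ) ≤ 2 ^ p.toReal := by
    simpa using Real.rpow_le_rpow_of_exponent_le one_le_two hq
  refine (Real.rpow_le_rpow_iff (by positivity) (norm_nonneg y) hq0).mp ?_
  calc (M / 2) ^ p.toReal = M ^ p.toReal / 2 ^ p.toReal := Real.div_rpow hM zero_le_two _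
    _ ≤ M ^ p.toReal * (1 / 2) := by
      rw [div_eq_mul_one_div]
      gcongr
    _ ≤ M ^ p.toReal * ∑' i : s, ‖x i‖ ^ p.toReal := by gcongr
    _ = ∑' i : s, M ^ p.toReal * ‖x i‖ ^ p.toReal := tsum_mul_left.symm
    _ ≤ ∑' i : s, ‖y (i + k)‖ ^ p.toReal := by
      refine (hx.mul_left _).tsum_le_tsum (fun i => ?_) (hy.comp_injective hshift)
      rw [← Real.mul_rpow hM (norm_nonneg _)]
      gcongr
      exact hdom i i.2
    _ ≤ ∑' m, ‖y m‖ ^ p.toReal := tsum_comp_le_tsum_of_inj hy (fun _ => by positivity) hshift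
    _ = ‖y‖ ^ p.toReal := (lp.norm_rpow_eq_tsum hq0 y).symm

lemma lp_isHalfConcentratedOn_or_compl (hp : p ≠ ⊤) {x : LpZ p} (hx : ‖x‖ = 1) (s : Set ℤ) :
    IsHalfConcentratedOn (lpCoord p) s x ∨ IsHalfConcentratedOn (lpCoord p) sᶜ x :=
  (lp_half_le_tsum_or_compl hp hx s).imp (lp_isHalfConcentratedOn hp) (lp_isHalfConcentratedOn hp)

end LpSpace

section C0Space

def c0Coord : C0Z →ₗ[ℝ] ℤ → ℝ where
  toFun x := x
  map_add' _ _ := rfl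
  map_smul' _ _ := rfl

lemma c0Coord_injective : Function.Injective c0Coord := DFunLike.coe_injective

def c0Single (i : ℤ) : C0Z where
  toFun := Pi.single i 1
  continuous_toFun := continuous_of_discreteTopology
  zero_at_infty' := by
    rw [Filter.cocompact_eq_cofinite]
    exact tendsto_const_nhds.congr'
      ((Filter.eventually_cofinite_ne i).mono fun j hj => by simp [hj])

lemma abs_apply_le_norm_c0 (x : C0Z) (i : ℤ) : |x i| ≤ ‖x‖ :=
  ZeroAtInftyContinuousMap.norm_toBCF_eq_norm (f := x) ▸ x.toBCF.norm_coe_le_norm i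

lemma norm_c0_le {x : C0Z} {C : ℝ} (hC : 0 ≤ C) (h : ∀ i, |x i| ≤ C) : ‖x‖ ≤ C :=
  ZeroAtInftyContinuousMap.norm_toBCF_eq_norm (f := x) ▸ (BoundedContinuousFunction.norm_le hC).mpr h

lemma norm_c0Single (i : ℤ) : ‖c0Single i‖ = 1 := by
  refine le_antisymm (norm_c0_le zero_le_one fun j => ?_) ?_
  · by_cases hj : j = i <;> simp [c0Single, hj]
  · simpa [c0Single] using abs_apply_le_norm_c0 (c0Single i) i

lemma c0_isHalfConcentratedOn {x : C0Z} {s : Set ℤ} {i : ℤ} (hi : i ∈ s) (hxi : 1 / 2 ≤ |x i|) :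
    IsHalfConcentratedOn c0Coord s x := fun y k M hM hdom =>
  calc M / 2 = M * (1 / 2) := by ring
    _ ≤ M * |x i| := by gcongr
    _ ≤ |y (i + k)| := hdom i hi
    _ ≤ ‖y‖ := abs_apply_le_norm_c0 y _

lemma c0_isHalfConcentratedOn_or_compl {x : C0Z} (hx : ‖x‖ = 1) (s : Set ℤ) :
    IsHalfConcentratedOn c0Coord s x ∨ IsHalfConcentratedOn c0Coord sᶜ x := by
  obtain ⟨i, hi⟩ : ∃ i, 1 / 2 ≤ |x i| := by
    by_contra! h
    linarith [norm_c0_le (by norm_num) fun i => (h i).le]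
  by_cases his : i ∈ s
  · exact .inl (c0_isHalfConcentratedOn his hi)
  · exact .inr (c0_isHalfConcentratedOn his hi)

end C0Space

/-- For an invertible bilateral weighted forward shift `F_w` on `ℓᵖ(ℤ)` (`1 ≤ p < ∞`)
or `c₀(ℤ)`, uniform topological expansivity is equivalent to the weight decomposition
condition. -/
theorem stmt4 (w : ℤ → ℝ) :
    (∀ (p : ENNReal) [Fact (1 ≤ p)], p ≠ ⊤ →
      ∀ T : LpZ p ≃L[ℝ] LpZ p,
        (∀ (x : LpZ p) (n : ℤ), (T x) n = w (n - 1) * x (n - 1)) →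
        (UnifTopExpansive T ↔ WeightDecomp w)) ∧
    (∀ T : C0Z ≃L[ℝ] C0Z,
        (∀ (x : C0Z) (n : ℤ), (T x) n = w (n - 1) * x (n - 1)) →
        (UnifTopExpansive T ↔ WeightDecomp w)) :=
  ⟨fun p _ hp _ hT => IsWeightedShift.unifTopExpansive_iff (coord := lpCoord p) (u := fun i => lp.single p i 1) hT
      (lpCoord_injective p) (fun _ => lp.coeFn_single p _ 1) (norm_lpSingle p)
      fun s _ hx => lp_isHalfConcentratedOn_or_compl hp hx s,
    fun _ hT => IsWeightedShift.unifTopExpansive_iff (coord := c0Coord) (u := c0Single) hT c0Coord_injective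
      (fun _ => rfl) norm_c0Single fun s _ hx => c0_isHalfConcentratedOn_or_compl hx s⟩
end

section
/- Let X be a locally convex space and T an invertible continuous linear operator on X with dense set of periodic points. If T has the periodic shadowing property, then T has the finite shadowing property. -/
/-!
Given a finite `U`-pseudotrajectory `x₀, …, x_k`, close it up into a periodic one: jump from
`T x_k` to a nearby periodic point `q`, let the orbit of `q` fade out linearly in `N` steps,
`(1 - a/N) • Tᵃ q`, and then let the backward orbit of a periodic point `q'` close to `x₀` fade in,
`(b/N) • T⁻⁽ᴺ⁺¹⁻ᵇ⁾ q'`, so that the last step lands near `x₀`. By linearity each fading step errs by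
`±N⁻¹` times a point of one of the two finite periodic orbits, which lies in `U` once `N` is large.
A periodic point shadowing this cycle shadows `x₀, …, x_k`.
-/

open Filter Topology Function

theorem Function.IsPeriodicPt.finite_range_iterate {α : Type*} {f : α → α} {p : ℕ} {x : α}
    (hx : IsPeriodicPt f p x) (hp : 0 < p) : (Set.range fun n => f^[n] x).Finite :=
  ((Set.finite_lt_nat p).image fun n => f^[n] x).subset <| by
    rintro _ ⟨n, rfl⟩
    exact ⟨n % p, Nat.mod_lt n hp, hx.iterate_mod_apply n⟩

theorem iterate_eq_of_forall_succ {α : Type*} {f : α → α} {o : ℤ → α}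
    (ho : ∀ j, o (j + 1) = f (o j)) (n : ℕ) : o n = f^[n] (o 0) := by
  induction n with
  | zero => rfl
  | succ n ih => rw [Nat.cast_succ, ho, ih, iterate_succ_apply']

theorem Dense.exists_sub_mem {X : Type*} [AddGroup X] [TopologicalSpace X]
    [IsTopologicalAddGroup X] {s : Set X} (hs : Dense s) {U : Set X} (hU : U ∈ 𝓝 0) (a : X) :
    ∃ y ∈ s, a - y ∈ U :=
  hs.inter_nhds_nonempty <|
    ((continuous_const.sub continuous_id).continuousAt (x := a)).preimage_mem_nhds
      (by simpa using hU)

section PeriodicExtension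

variable {α : Type*} (P : ℕ) (Z : ℕ → α)

def periodicExtension : ℤ → α := fun j => Z (j : ZMod P).val

theorem periodicExtension_add_period (j : ℤ) :
    periodicExtension P Z (j + P) = periodicExtension P Z j := by
  simp [periodicExtension]

variable {P Z}

theorem periodicExtension_natCast {r : ℕ} (hr : r < P) : periodicExtension P Z r = Z r := by
  simp [periodicExtension, ZMod.val_natCast, Nat.mod_eq_of_lt hr]

theorem periodicExtension_rel_succ [NeZero P] {R : α → α → Prop}
    (hZ : ∀ r < P, R (Z r) (Z ((r + 1) % P))) (j : ℤ) :
    R (periodicExtension P Z j) (periodicExtension P Z (j + 1)) := by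
  simpa [periodicExtension, ZMod.val_add, ZMod.val_one_eq_one_mod, Nat.add_mod]
    using hZ _ (ZMod.val_lt (j : ZMod P))

end PeriodicExtension

section ClosingCycle

variable {X : Type*} [AddCommGroup X] [Module ℝ X] [TopologicalSpace X]

theorem eventually_forall_inv_natCast_smul_mem [ContinuousSMul ℝ X] {U : Set X}
    (hU : U ∈ 𝓝 0) {f : ℕ → X} (hf : (Set.range f).Finite) :
    ∀ᶠ N : ℕ in atTop, ∀ a, (N : ℝ)⁻¹ • f a ∈ U := by
  have h : ∀ v ∈ Set.range f, ∀ᶠ N : ℕ in atTop, (N : ℝ)⁻¹ • v ∈ U := fun v _ =>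
    ((tendsto_inv_atTop_nhds_zero_nat (𝕜 := ℝ)).smul_const v).eventually_mem
      (by simpa using hU)
  filter_upwards [hf.eventually_all.2 h] with N hN a using hN _ ⟨a, rfl⟩

noncomputable def closingCycle (T : X ≃L[ℝ] X) (x : ℕ → X) (k N : ℕ) (q q' : X) : ℕ → X :=
  fun r =>
    if r ≤ k then x r
    else if r ≤ k + N + 1 then (1 - ((r - (k + 1) : ℕ) : ℝ) / N) • T^[r - (k + 1)] q
    else (((r - (k + N + 1) : ℕ) : ℝ) / N) • T.symm^[k + 2 * N + 2 - r] q'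

variable {T : X ≃L[ℝ] X} {x : ℕ → X} {k N : ℕ} {q q' : X}

theorem closingCycle_of_le {r : ℕ} (hr : r ≤ k) : closingCycle T x k N q q' r = x r :=
  if_pos hr

theorem closingCycle_fade {a : ℕ} (ha : a ≤ N) :
    closingCycle T x k N q q' (k + 1 + a) = (1 - (a : ℝ) / N) • T^[a] q := by
  simp only [closingCycle, if_neg (show ¬k + 1 + a ≤ k by omega),
    if_pos (show k + 1 + a ≤ k + N + 1 by omega), Nat.add_sub_cancel_left]

theorem closingCycle_rise (hN : N ≠ 0) {b : ℕ} (hb : b ≤ N) :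
    closingCycle T x k N q q' (k + N + 1 + b) = ((b : ℝ) / N) • T.symm^[N + 1 - b] q' := by
  rcases Nat.eq_zero_or_pos b with rfl | hb0
  · rw [add_zero, show k + N + 1 = k + 1 + N by omega, closingCycle_fade le_rfl,
      div_self (Nat.cast_ne_zero.2 hN)]
    simp
  · simp only [closingCycle, if_neg (show ¬k + N + 1 + b ≤ k by omega),
      if_neg (show ¬k + N + 1 + b ≤ k + N + 1 by omega), Nat.add_sub_cancel_left,
      show k + 2 * N + 2 - (k + N + 1 + b) = N + 1 - b by omega]

theorem closingCycle_fade_step {a : ℕ} (ha : a < N) :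
    T (closingCycle T x k N q q' (k + 1 + a)) - closingCycle T x k N q q' (k + 1 + a + 1)
      = (N : ℝ)⁻¹ • T^[a + 1] q := by
  rw [closingCycle_fade ha.le, add_assoc, closingCycle_fade ha, map_smul,
    ← iterate_succ_apply' T, ← sub_smul]
  congr 1
  push_cast
  ring

theorem closingCycle_rise_step (hN : N ≠ 0) {b : ℕ} (hb : b < N) :
    T (closingCycle T x k N q q' (k + N + 1 + b)) - closingCycle T x k N q q' (k + N + 1 + b + 1)
      = -((N : ℝ)⁻¹ • T.symm^[N - b] q') := by
  rw [closingCycle_rise hN hb.le, add_assoc, closingCycle_rise hN hb, map_smul,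
    show N + 1 - b = N - b + 1 by omega, show N + 1 - (b + 1) = N - b by omega,
    iterate_succ_apply' T.symm, T.apply_symm_apply, ← sub_smul, ← neg_smul]
  congr 1
  push_cast
  ring

theorem closingCycle_step {U : Set X} (hx : ∀ j < k, T (x j) - x (j + 1) ∈ U)
    (hq : T (x k) - q ∈ U) (hq' : q' - x 0 ∈ U) (hN : N ≠ 0)
    (hfade : ∀ a, (N : ℝ)⁻¹ • T^[a] q ∈ U) (hrise : ∀ b, -((N : ℝ)⁻¹ • T.symm^[b] q') ∈ U) :
    ∀ r < k + 2 * N + 2, T (closingCycle T x k N q q' r)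
      - closingCycle T x k N q q' ((r + 1) % (k + 2 * N + 2)) ∈ U := by
  intro r hr
  rcases lt_trichotomy r k with hrk | rfl | hkr
  · rw [Nat.mod_eq_of_lt (by omega), closingCycle_of_le hrk.le, closingCycle_of_le hrk]
    exact hx r hrk
  · rw [Nat.mod_eq_of_lt (by omega), closingCycle_of_le le_rfl,
      show r + 1 = r + 1 + 0 by rfl, closingCycle_fade (Nat.zero_le N)]
    simpa using hq
  obtain ⟨a, ha, rfl⟩ | ⟨b, hb, rfl⟩ | rfl :
      (∃ a < N, r = k + 1 + a) ∨ (∃ b < N, r = k + N + 1 + b) ∨ r = k + 2 * N + 1 := by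
    rcases lt_or_ge r (k + N + 1) with h | h
    · exact Or.inl ⟨r - (k + 1), by omega, by omega⟩
    · rcases lt_or_ge r (k + 2 * N + 1) with h' | h'
      · exact Or.inr (Or.inl ⟨r - (k + N + 1), by omega, by omega⟩)
      · exact Or.inr (Or.inr (by omega))
  · rw [Nat.mod_eq_of_lt (by omega), closingCycle_fade_step ha]
    exact hfade (a + 1)
  · rw [Nat.mod_eq_of_lt (by omega), closingCycle_rise_step hN hb]
    exact hrise (N - b)
  · rw [show k + 2 * N + 1 + 1 = k + 2 * N + 2 by omega, Nat.mod_self,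
      closingCycle_of_le (Nat.zero_le k), show k + 2 * N + 1 = k + N + 1 + N by omega,
      closingCycle_rise hN le_rfl, div_self (Nat.cast_ne_zero.2 hN), one_smul,
      show N + 1 - N = 1 by omega, iterate_one, T.apply_symm_apply]
    exact hq'

end ClosingCycle

theorem stmt5_general {X : Type*} [AddCommGroup X] [Module ℝ X] [TopologicalSpace X]
    [IsTopologicalAddGroup X] [ContinuousSMul ℝ X]
    (T : X ≃L[ℝ] X)
    (hdense : Dense {x : X | ∃ p : ℕ, 1 ≤ p ∧ ((T : X →L[ℝ] X) ^ p) x = x})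
    (hPSP : ∀ V ∈ nhds (0 : X), ∃ U ∈ nhds (0 : X),
      ∀ x : ℤ → X, (∀ j : ℤ, T (x j) - x (j + 1) ∈ U) →
        (∃ p : ℕ, 1 ≤ p ∧ ∀ j : ℤ, x (j + p) = x j) →
        ∃ o : ℤ → X, (∀ j : ℤ, o (j + 1) = T (o j)) ∧
          (∃ p : ℕ, 1 ≤ p ∧ ∀ j : ℤ, o (j + p) = o j) ∧ ∀ j : ℤ, x j - o j ∈ V) :
    ∀ V ∈ nhds (0 : X), ∃ U ∈ nhds (0 : X),
      ∀ k : ℕ, 1 ≤ k → ∀ x : ℕ → X, (∀ j < k, T (x j) - x (j + 1) ∈ U) →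
        ∃ z : X, ∀ j ≤ k, x j - ((T : X →L[ℝ] X) ^ j) z ∈ V := by
  intro V hV
  obtain ⟨U, hU, hshadow⟩ := hPSP V hV
  refine ⟨U, hU, fun k _ x hx => ?_⟩
  obtain ⟨q, ⟨p, hp, hq⟩, hqU⟩ := hdense.exists_sub_mem hU (T (x k))
  obtain ⟨q', ⟨p', hp', hq'⟩, hq'U⟩ := hdense.exists_sub_mem (neg_mem_nhds_zero X hU) (x 0)
  have hqT : IsPeriodicPt T p q := by simpa [IsPeriodicPt, IsFixedPt] using hq
  have hq'T : IsPeriodicPt T.symm p' q' :=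
    IsFixedPt.to_leftInverse (by simpa [IsPeriodicPt, IsFixedPt] using hq')
      (LeftInverse.iterate T.symm_apply_apply p')
  obtain ⟨N, hN, hfade, hrise⟩ := ((eventually_ne_atTop 0).and
    ((eventually_forall_inv_natCast_smul_mem hU (hqT.finite_range_iterate hp)).and
    (eventually_forall_inv_natCast_smul_mem (neg_mem_nhds_zero X hU)
      (hq'T.finite_range_iterate hp')))).exists
  set P := k + 2 * N + 2
  have : NeZero P := ⟨by omega⟩
  have hcycle := closingCycle_step hx hqU (by simpa using hq'U) hN hfade
    fun b => Set.mem_neg.1 (hrise b)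
  obtain ⟨o, horbit, -, hshadowed⟩ := hshadow (periodicExtension P (closingCycle T x k N q q'))
    (periodicExtension_rel_succ (R := fun u v => T u - v ∈ U) hcycle)
    ⟨P, by omega, periodicExtension_add_period P _⟩
  refine ⟨o 0, fun j hj => ?_⟩
  simpa [periodicExtension_natCast (show j < P by omega), closingCycle_of_le hj,
    iterate_eq_of_forall_succ horbit] using hshadowed j

/-- If an invertible continuous linear operator `T` on a locally convex space has a
dense set of periodic points and the periodic shadowing property, then it has the
finite shadowing property. -/
theorem stmt5 {X : Type*} [AddCommGroup X] [Module ℝ X] [TopologicalSpace X]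
    [IsTopologicalAddGroup X] [ContinuousSMul ℝ X] [LocallyConvexSpace ℝ X]
    (T : X ≃L[ℝ] X)
    (hdense : Dense {x : X | ∃ p : ℕ, 1 ≤ p ∧ ((T : X →L[ℝ] X) ^ p) x = x})
    (hPSP : ∀ V ∈ nhds (0 : X), ∃ U ∈ nhds (0 : X),
      ∀ x : ℤ → X, (∀ j : ℤ, T (x j) - x (j + 1) ∈ U) →
        (∃ p : ℕ, 1 ≤ p ∧ ∀ j : ℤ, x (j + p) = x j) →
        ∃ o : ℤ → X, (∀ j : ℤ, o (j + 1) = T (o j)) ∧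
          (∃ p : ℕ, 1 ≤ p ∧ ∀ j : ℤ, o (j + p) = o j) ∧ ∀ j : ℤ, x j - o j ∈ V) :
    ∀ V ∈ nhds (0 : X), ∃ U ∈ nhds (0 : X),
      ∀ k : ℕ, 1 ≤ k → ∀ x : ℕ → X, (∀ j < k, T (x j) - x (j + 1) ∈ U) →
        ∃ z : X, ∀ j ≤ k, x j - ((T : X →L[ℝ] X) ^ j) z ∈ V :=
  stmt5_general T hdense hPSP
end

section
/- Let B_w be an invertible bilateral weighted backward shift on ℓp(ℤ) (1 ≤ p < ∞) or c0(ℤ), with weights w bounded and bounded away from zero. If B_w has a dense set of periodic points, then B_w has the shadowing property if and only if B_w has the periodic shadowing property. -/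
open Finset

section Defs

variable {X : Type*} [NormedAddCommGroup X] [NormedSpace ℝ X]

/-- `o : ℤ → X` is a full orbit of `T`. -/
def IsOrbit (T : X ≃L[ℝ] X) (o : ℤ → X) : Prop := ∀ j : ℤ, o (j + 1) = T (o j)

/-- `(x_j)_{j ∈ ℤ}` is a `δ`-pseudotrajectory of `T`. -/
def IsPT (T : X ≃L[ℝ] X) (δ : ℝ) (x : ℤ → X) : Prop :=
  ∀ j : ℤ, ‖T (x j) - x (j + 1)‖ < δ

/-- A sequence `x : ℤ → X` is periodic. -/
def IsPer (x : ℤ → X) : Prop := ∃ p : ℕ, 1 ≤ p ∧ ∀ j : ℤ, x (j + p) = x j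

/-- The shadowing property: every `δ`-pseudotrajectory is `ε`-shadowed by some full orbit. -/
def SP (T : X ≃L[ℝ] X) : Prop :=
  ∀ ε > (0 : ℝ), ∃ δ > (0 : ℝ), ∀ x : ℤ → X, IsPT T δ x →
    ∃ o : ℤ → X, IsOrbit T o ∧ ∀ j : ℤ, ‖x j - o j‖ < ε

/-- The periodic shadowing property: every periodic `δ`-pseudotrajectory is `ε`-shadowed
by (the orbit of) a periodic point. -/
def PSP (T : X ≃L[ℝ] X) : Prop :=
  ∀ ε > (0 : ℝ), ∃ δ > (0 : ℝ), ∀ x : ℤ → X, IsPT T δ x → IsPer x →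
    ∃ o : ℤ → X, IsOrbit T o ∧ IsPer o ∧ ∀ j : ℤ, ‖x j - o j‖ < ε

/-- `x` is a chain recurrent point of `T`: for every `δ > 0` there is a finite
`δ`-chain from `x` to `x`. -/
def ChainRec (T : X →L[ℝ] X) (x : X) : Prop :=
  ∀ δ > (0 : ℝ), ∃ (k : ℕ) (c : ℕ → X), 1 ≤ k ∧ c 0 = x ∧ c k = x ∧
    ∀ j < k, ‖T (c j) - c (j + 1)‖ < δ

/-- `T` has no nontrivial periodic point. -/
def OnlyTrivialPer (T : X →L[ℝ] X) : Prop :=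
  ∀ x : X, (∃ p : ℕ, 1 ≤ p ∧ (T ^ p) x = x) → x = 0

end Defs

/-! Shadowing of a linear operator is automatically linear: a pseudotrajectory with defects at
most `s` is shadowed within `K s`. On a Banach space it therefore suffices to trade defect `s`
for defect `s / 2` at the price of a correction of size `K s`; iterating, the corrections sum
geometrically and converge to an exact orbit.

If the pseudotrajectory is `Q`-periodic, average the `N` translates by multiples of `Q` of a
shadowing orbit: this orbit is still `K s`-close and moves by only `2 K s / N` over one period,
so reading it modulo `Q` halves the defect and keeps `Q`-periodicity.

Conversely, dense periodic points close any finite piece of a pseudotrajectory into a periodic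
one, by fading linearly from the orbit of one periodic point to that of another. Periodic
shadowing then shadows every window of length `2 L` by an orbit, and interpolating linearly
between the orbits of overlapping windows costs only `2 K s / L` in the defect. -/

open Filter Topology Function

section General

theorem Int.ediv_emod_add_one_cases (j : ℤ) {L : ℤ} (hL : 0 < L) :
    ((j + 1) / L = j / L ∧ (j + 1) % L = j % L + 1) ∨
      (j % L = L - 1 ∧ (j + 1) / L = j / L + 1 ∧ (j + 1) % L = 0) := by
  have h := Int.emod_add_mul_ediv j L
  have h1 := Int.emod_lt_of_pos j hL
  rcases (Int.add_one_le_iff.2 h1).lt_or_eq with hlt | heq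
  · exact .inl ((Int.ediv_emod_unique hL).2
      ⟨by linear_combination h, by linarith [Int.emod_nonneg j hL.ne'], hlt⟩)
  · exact .inr ⟨by linarith, (Int.ediv_emod_unique hL).2
      ⟨by linear_combination h - heq, le_rfl, hL⟩⟩

theorem Function.Periodic.apply_emod {α : Type*} {x : ℤ → α} {Q : ℤ} (hx : Periodic x Q)
    (j : ℤ) : x (j % Q) = x j := by
  rw [Int.emod_def, mul_comm]
  simpa using hx.sub_int_mul_eq (j / Q)

theorem isClosed_setOf_periodic {α β : Type*} [Add α] [TopologicalSpace β] [T2Space β]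
    (c : α) : IsClosed {y : α → β | Periodic y c} := by
  simp only [Periodic, Set.ofPred_forall]
  exact isClosed_iInter fun j => isClosed_eq (continuous_apply _) (continuous_apply _)

theorem Function.IsPeriodicPt.exists_norm_iterate_le {E : Type*} [SeminormedAddGroup E]
    {f : E → E} {n : ℕ} {p : E} (hp : IsPeriodicPt f n p) (hn : 0 < n) :
    ∃ B, ∀ i, ‖f^[i] p‖ ≤ B :=
  ⟨∑ i ∈ range n, ‖f^[i] p‖, fun i => by
    rw [← hp.iterate_mod_apply]
    exact single_le_sum (f := fun i => ‖f^[i] p‖) (fun _ _ => norm_nonneg _)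
      (mem_range.2 (Nat.mod_lt _ hn))⟩

theorem norm_sub_add_smul_sub_le {E : Type*} [SeminormedAddCommGroup E] [NormedSpace ℝ E]
    {v a b : E} {r u : ℝ} (ha : ‖v - a‖ ≤ r) (hb : ‖v - b‖ ≤ r) (hu : u ∈ Set.Icc (0 : ℝ) 1) :
    ‖v - (a + u • (b - a))‖ ≤ r := by
  have hball : ∀ {c}, ‖v - c‖ ≤ r → c ∈ Metric.closedBall v r := fun h => by
    rwa [Metric.mem_closedBall, dist_comm, dist_eq_norm]
  simpa [dist_comm, dist_eq_norm] using
    (convex_closedBall v r).add_smul_sub_mem (hball ha) (hball hb) hu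

end General

section Shadowing

variable {X : Type*} [NormedAddCommGroup X] [NormedSpace ℝ X] {T : X ≃L[ℝ] X}

def IsPTLe (T : X ≃L[ℝ] X) (s : ℝ) (x : ℤ → X) : Prop :=
  ∀ j : ℤ, ‖T (x j) - x (j + 1)‖ ≤ s

theorem IsPT.isPTLe {δ : ℝ} {x : ℤ → X} (h : IsPT T δ x) : IsPTLe T δ x :=
  fun j => (h j).le

theorem IsPTLe.mono {s t : ℝ} {x : ℤ → X} (h : IsPTLe T s x) (hst : s ≤ t) : IsPTLe T t x :=
  fun j => (h j).trans hst

theorem IsPTLe.comp_sub {s : ℝ} {x : ℤ → X} (h : IsPTLe T s x) (a : ℤ) :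
    IsPTLe T s (fun j => x (j - a)) :=
  fun j => by simpa [sub_add_eq_add_sub] using h (j - a)

theorem IsOrbit.smul {o : ℤ → X} (h : IsOrbit T o) (c : ℝ) : IsOrbit T (c • o) :=
  fun j => by simp [h j]

theorem IsPer.smul {x : ℤ → X} (h : IsPer x) (c : ℝ) : IsPer (c • x) :=
  h.imp fun _ ⟨hp, hx⟩ => ⟨hp, fun j => by simp [hx j]⟩

theorem isPTLe_comp_emod {s : ℝ} {z : ℤ → X} {Q : ℤ} (hQ : 0 < Q)
    (hz : ∀ r, 0 ≤ r → r + 1 < Q → ‖T (z r) - z (r + 1)‖ ≤ s)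
    (hwrap : ‖T (z (Q - 1)) - z 0‖ ≤ s) : IsPTLe T s (fun j => z (j % Q)) := by
  intro j
  show ‖T (z (j % Q)) - z ((j + 1) % Q)‖ ≤ s
  rcases Int.ediv_emod_add_one_cases j hQ with ⟨-, h⟩ | ⟨h, -, h'⟩
  · rw [h]
    exact hz _ (Int.emod_nonneg j hQ.ne') (h ▸ Int.emod_lt_of_pos (j + 1) hQ)
  · simpa only [h, h'] using hwrap

theorem IsOrbit.interp_sub_interp {o o' : ℤ → X} (ho : IsOrbit T o) (ho' : IsOrbit T o')
    (u v : ℝ) (j : ℤ) :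
    T (o j + u • (o' j - o j)) - (o (j + 1) + v • (o' (j + 1) - o (j + 1))) =
      (u - v) • (o' (j + 1) - o (j + 1)) := by
  rw [ho, ho']
  simp only [map_add, map_smul, map_sub]
  module

def ShadowsIn (T : X ≃L[ℝ] X) (A : Set (ℤ → X)) : Prop :=
  ∀ ε > (0 : ℝ), ∃ δ > (0 : ℝ), ∀ x, IsPT T δ x → x ∈ A →
    ∃ o, IsOrbit T o ∧ o ∈ A ∧ ∀ j, ‖x j - o j‖ < ε

def ShadowsLinearlyIn (T : X ≃L[ℝ] X) (A : Set (ℤ → X)) (K : ℝ) : Prop :=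
  ∀ s > (0 : ℝ), ∀ x, IsPTLe T s x → x ∈ A →
    ∃ o, IsOrbit T o ∧ o ∈ A ∧ ∀ j, ‖x j - o j‖ ≤ K * s

theorem sp_iff_shadowsIn_univ : SP T ↔ ShadowsIn T Set.univ := by
  simp [SP, ShadowsIn]

theorem psp_iff_shadowsIn_setOf_isPer : PSP T ↔ ShadowsIn T {x | IsPer x} := Iff.rfl

theorem ShadowsIn.exists_shadowsLinearlyIn {A : Set (ℤ → X)} (h : ShadowsIn T A)
    (hA : ∀ (c : ℝ) x, x ∈ A → c • x ∈ A) : ∃ K > 0, ShadowsLinearlyIn T A K := by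
  obtain ⟨δ, hδ, hsh⟩ := h 1 one_pos
  refine ⟨2 / δ, by positivity, fun s hs x hx hxA => ?_⟩
  set c : ℝ := δ / (2 * s) with hc_def
  have hc : 0 < c := by positivity
  have hcx : IsPT T δ (c • x) := fun j => by
    calc ‖T ((c • x) j) - (c • x) (j + 1)‖ = c * ‖T (x j) - x (j + 1)‖ := by
          rw [Pi.smul_apply, Pi.smul_apply, map_smul, ← smul_sub, norm_smul,
            Real.norm_of_nonneg hc.le]
      _ ≤ c * s := by gcongr; exact hx j
      _ = δ / 2 := by rw [hc_def]; field_simp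
      _ < δ := half_lt_self hδ
  obtain ⟨o, ho, hoA, hxo⟩ := hsh _ hcx (hA c x hxA)
  refine ⟨c⁻¹ • o, ho.smul _, hA _ _ hoA, fun j => ?_⟩
  have hxj : x j - (c⁻¹ • o) j = c⁻¹ • ((c • x) j - o j) := by
    rw [Pi.smul_apply, Pi.smul_apply, smul_sub, inv_smul_smul₀ hc.ne']
  calc ‖x j - (c⁻¹ • o) j‖ = c⁻¹ * ‖(c • x) j - o j‖ := by
        rw [hxj, norm_smul, Real.norm_of_nonneg (inv_pos.2 hc).le]
    _ ≤ c⁻¹ * 1 := by gcongr; exact (hxo j).le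
    _ = 2 / δ * s := by rw [hc_def]; field_simp

theorem exists_isOrbit_tendsto [CompleteSpace X] {g : ℕ → ℤ → X} {c s : ℝ}
    (hg : ∀ n j, dist (g n j) (g (n + 1) j) ≤ c * (1 / 2) ^ n)
    (hgT : ∀ n, IsPTLe T (s * (1 / 2) ^ n) (g n)) :
    ∃ o, Tendsto g atTop (𝓝 o) ∧ IsOrbit T o ∧ ∀ j, ‖g 0 j - o j‖ ≤ 2 * c := by
  choose o ho using fun j => cauchySeq_tendsto_of_complete
    (cauchySeq_of_le_geometric _ _ (by norm_num) (hg · j))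
  refine ⟨o, tendsto_pi_nhds.2 ho, fun j => ?_, fun j => ?_⟩
  · have hlim : Tendsto (fun n => T (g n j) - g n (j + 1)) atTop (𝓝 (T (o j) - o (j + 1))) :=
      ((T.continuous.tendsto _).comp (ho j)).sub (ho (j + 1))
    have hzero : Tendsto (fun n => s * (1 / 2 : ℝ) ^ n) atTop (𝓝 0) := by
      simpa using (tendsto_pow_atTop_nhds_zero_of_lt_one (r := (1 / 2 : ℝ)) (by norm_num)
        (by norm_num)).const_mul s
    have : ‖T (o j) - o (j + 1)‖ ≤ 0 :=
      le_of_tendsto_of_tendsto' hlim.norm hzero fun n => hgT n j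
    exact (sub_eq_zero.1 (norm_le_zero_iff.1 this)).symm
  · rw [← dist_eq_norm]
    convert dist_le_of_le_geometric_of_tendsto₀ _ _ (by norm_num) (hg · j) (ho j) using 1
    ring

theorem exists_isOrbit_of_halving [CompleteSpace X] {C : Set (ℤ → X)} (hC : IsClosed C)
    {K : ℝ}
    (step : ∀ s > (0 : ℝ), ∀ x ∈ C, IsPTLe T s x →
      ∃ x' ∈ C, IsPTLe T (s / 2) x' ∧ ∀ j, ‖x j - x' j‖ ≤ K * s)
    {s : ℝ} (hs : 0 < s) {x : ℤ → X} (hxC : x ∈ C) (hx : IsPTLe T s x) :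
    ∃ o ∈ C, IsOrbit T o ∧ ∀ j, ‖x j - o j‖ ≤ 2 * (K * s) := by
  choose! F hFC hFT hFx using step
  let g : ℕ → ℤ → X := fun n => Nat.rec x (fun n y => F (s * (1 / 2) ^ n) y) n
  have hg : ∀ n, g n ∈ C ∧ IsPTLe T (s * (1 / 2) ^ n) (g n) := by
    intro n
    induction n with
    | zero => simpa [g] using ⟨hxC, hx⟩
    | succ n ih =>
      have hpos : 0 < s * (1 / 2) ^ n := by positivity
      refine ⟨hFC _ hpos _ ih.1 ih.2, ?_⟩
      convert hFT _ hpos _ ih.1 ih.2 using 1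
      ring
  obtain ⟨o, hlim, ho, hxo⟩ := exists_isOrbit_tendsto (c := K * s)
    (fun n j => by
      rw [dist_eq_norm, mul_assoc]
      exact hFx _ (by positivity) _ (hg n).1 (hg n).2 j)
    fun n => (hg n).2
  exact ⟨o, hC.mem_of_tendsto hlim (Eventually.of_forall fun n => (hg n).1), ho, hxo⟩

theorem exists_isOrbit_average {x o : ℤ → X} {Q : ℤ} (hx : Periodic x Q) (ho : IsOrbit T o)
    {r : ℝ} (hxo : ∀ j, ‖x j - o j‖ ≤ r) {N : ℕ} (hN : 0 < N) :
    ∃ o', IsOrbit T o' ∧ (∀ j, ‖x j - o' j‖ ≤ r) ∧ ‖o' Q - o' 0‖ ≤ 2 * r / N := by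
  let o' : ℤ → X := fun j => ∑ k ∈ range N, (N : ℝ)⁻¹ • o (j + k * Q)
  refine ⟨o', fun j => ?_, fun j => ?_, ?_⟩
  · simp only [o', map_sum, map_smul]
    exact sum_congr rfl fun k _ => by rw [add_right_comm, ho]
  · have : o' j ∈ Metric.closedBall (x j) r :=
      (convex_closedBall _ _).sum_mem (fun _ _ => by positivity) (by simp [hN.ne'])
        fun k _ => by
          rw [Metric.mem_closedBall, dist_comm, dist_eq_norm, ← hx.nat_mul k j]
          exact hxo _
    rwa [Metric.mem_closedBall, dist_comm, dist_eq_norm] at this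
  · have hsum : o' Q - o' 0 = (N : ℝ)⁻¹ • (o (N * Q) - o 0) := by
      simp only [o', ← sum_sub_distrib, ← smul_sub, ← smul_sum]
      have htel := sum_range_sub (fun k : ℕ => o (k * Q)) N
      rw [Nat.cast_zero, zero_mul] at htel
      rw [← htel]
      refine congrArg _ (sum_congr rfl fun k _ => ?_)
      push_cast
      ring_nf
    have hper : o (N * Q) - o 0 = (x 0 - o 0) - (x (N * Q) - o (N * Q)) := by
      rw [show x (N * Q) = x 0 by simpa using hx.nat_mul N 0]
      abel
    calc ‖o' Q - o' 0‖ = (N : ℝ)⁻¹ * ‖(x 0 - o 0) - (x (N * Q) - o (N * Q))‖ := by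
          rw [hsum, hper, norm_smul, Real.norm_of_nonneg (by positivity)]
      _ ≤ (N : ℝ)⁻¹ * (r + r) := by gcongr; exact norm_sub_le_of_le (hxo 0) (hxo _)
      _ = 2 * r / N := by ring

theorem ShadowsLinearlyIn.exists_periodic_halving {K : ℝ} (hT : ShadowsLinearlyIn T Set.univ K)
    (hK : 0 < K)
    {Q : ℤ} (hQ : 0 < Q) {s : ℝ} (hs : 0 < s) {x : ℤ → X} (hx : Periodic x Q)
    (hxs : IsPTLe T s x) :
    ∃ x', Periodic x' Q ∧ IsPTLe T (s / 2) x' ∧ ∀ j, ‖x j - x' j‖ ≤ K * s := by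
  obtain ⟨o, ho, -, hxo⟩ := hT s hs x hxs trivial
  have hN : 4 * K ≤ ⌈4 * K⌉₊ := Nat.le_ceil _
  obtain ⟨o', ho', hxo', hQo'⟩ :=
    exists_isOrbit_average hx ho hxo (Nat.ceil_pos.2 (by positivity : 0 < 4 * K))
  refine ⟨fun j => o' (j % Q), fun j => by simp, isPTLe_comp_emod hQ (fun r _ _ => ?_) ?_,
    fun j => by simpa [hx.apply_emod] using hxo' (j % Q)⟩
  · rw [ho' r, sub_self, norm_zero]
    positivity
  · calc ‖T (o' (Q - 1)) - o' 0‖ = ‖o' Q - o' 0‖ := by rw [← ho', sub_add_cancel]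
      _ ≤ 2 * (K * s) / ⌈4 * K⌉₊ := hQo'
      _ ≤ s / 2 := by
        rw [div_le_iff₀ (by linarith)]
        nlinarith

theorem psp_of_sp [CompleteSpace X] (h : SP T) : PSP T := by
  obtain ⟨K, hK, hlin⟩ :=
    (sp_iff_shadowsIn_univ.1 h).exists_shadowsLinearlyIn fun _ _ _ => trivial
  intro ε hε
  refine ⟨ε / (4 * K), by positivity, fun x hx ⟨Q, hQ, hxQ⟩ => ?_⟩
  obtain ⟨o, hoQ, ho, hxo⟩ := exists_isOrbit_of_halving (isClosed_setOf_periodic (Q : ℤ))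
    (fun s hs x hx hxs => hlin.exists_periodic_halving hK (by omega) hs hx hxs)
    (by positivity) hxQ hx.isPTLe
  refine ⟨o, ho, ⟨Q, hQ, hoQ⟩, fun j => (hxo j).trans_lt ?_⟩
  field_simp
  linarith

theorem exists_chain_of_isPeriodicPt {p p' : X} {n n' : ℕ} (hn : 0 < n) (hn' : 0 < n')
    (hp : IsPeriodicPt T n p) (hp' : IsPeriodicPt T n' p') {s : ℝ} (hs : 0 < s) :
    ∃ M : ℕ, 0 < M ∧ ∃ c : ℕ → X, c 0 = p ∧ c M = p' ∧
      ∀ i < M, ‖T (c i) - c (i + 1)‖ ≤ s := by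
  obtain ⟨B, hB⟩ := hp.exists_norm_iterate_le hn
  obtain ⟨B', hB'⟩ := hp'.exists_norm_iterate_le hn'
  set m := ⌈(B + B') / s⌉₊ + 1
  set M := n * n' * m
  have hM : 0 < M := by positivity
  have hmM : (m : ℝ) ≤ M := Nat.cast_le.2 (Nat.le_mul_of_pos_left m (by positivity))
  have hBM : (B + B') / s ≤ M := by
    have := Nat.le_ceil ((B + B') / s)
    push_cast [m] at hmM
    linarith
  -- fade linearly from the orbit of `p` to the orbit of `p'`, which both return at time `M`
  refine ⟨M, hM, fun i => (1 - i / M : ℝ) • T^[i] p + (i / M : ℝ) • T^[i] p', by simp, ?_,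
    fun i _ => ?_⟩
  · simpa [hM.ne'] using ((hp'.const_mul n).mul_const m).eq
  · have hdef : T ((1 - i / M : ℝ) • T^[i] p + (i / M : ℝ) • T^[i] p') -
        ((1 - (i + 1 : ℕ) / M : ℝ) • T^[i + 1] p + ((i + 1 : ℕ) / M : ℝ) • T^[i + 1] p') =
        (M : ℝ)⁻¹ • (T^[i + 1] p - T^[i + 1] p') := by
      simp only [map_add, map_smul, iterate_succ_apply']
      push_cast
      module
    rw [hdef, norm_smul, Real.norm_of_nonneg (by positivity), ← div_eq_inv_mul,
      div_le_iff₀ (by positivity)]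
    calc ‖T^[i + 1] p - T^[i + 1] p'‖ ≤ B + B' := norm_sub_le_of_le (hB _) (hB' _)
      _ ≤ s * M := by rwa [div_le_iff₀' hs] at hBM

theorem exists_isPer_isPTLe_eqOn (hD : Dense (periodicPts T)) {s : ℝ} (hs : 0 < s)
    {x : ℤ → X} (hx : IsPTLe T s x) {a b : ℤ} (hab : a ≤ b) :
    ∃ y, IsPer y ∧ IsPTLe T s y ∧ ∀ j, a ≤ j → j ≤ b → y j = x j := by
  obtain ⟨p, ⟨n, hn, hp⟩, hpx⟩ := hD.exists_dist_lt (T (x b)) hs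
  obtain ⟨p', ⟨n', hn', hp'⟩, hpx'⟩ := hD.exists_dist_lt (x a) (half_pos hs)
  obtain ⟨M, hM, c, hc0, hcM, hc⟩ := exists_chain_of_isPeriodicPt hn hn' hp hp' (half_pos hs)
  set Q : ℕ := (b - a).toNat + 1 + M
  have hQ : (Q : ℤ) = b - a + 1 + M := by omega
  -- one period of `y` is `x a, …, x b` followed by the chain from `p ≈ T (x b)` to `p' ≈ x a`
  -- with its endpoint dropped
  let z : ℤ → X := fun r => if r ≤ b - a then x (a + r) else c (r - (b - a + 1)).toNat
  refine ⟨fun j => z ((j - a) % Q),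
    ⟨Q, by omega, fun j => by simp only [add_sub_right_comm, Int.add_emod_right]⟩,
    (isPTLe_comp_emod (by omega) (fun r hr hrQ => ?_) ?_).comp_sub a, fun j hj hj' => ?_⟩
  · rcases lt_trichotomy r (b - a) with h | rfl | h
    · simp only [z, if_pos h.le, if_pos (show r + 1 ≤ b - a by omega), ← add_assoc]
      exact hx (a + r)
    · simp only [z, le_refl, if_true, if_neg (show ¬ b - a + 1 ≤ b - a by omega), sub_self,
        Int.toNat_zero, hc0, add_sub_cancel, ← dist_eq_norm]
      exact hpx.le
    · simp only [z, if_neg (show ¬ r ≤ b - a by omega), if_neg (show ¬ r + 1 ≤ b - a by omega)]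
      rw [show (r + 1 - (b - a + 1)).toNat = (r - (b - a + 1)).toNat + 1 by omega]
      exact (hc _ (by omega)).trans (half_le_self hs.le)
  · simp only [z, if_neg (show ¬ (Q : ℤ) - 1 ≤ b - a by omega),
      if_pos (show (0 : ℤ) ≤ b - a by omega), add_zero]
    rw [show ((Q : ℤ) - 1 - (b - a + 1)).toNat = M - 1 by omega]
    calc ‖T (c (M - 1)) - x a‖ ≤ ‖T (c (M - 1)) - c M‖ + ‖c M - x a‖ :=
          norm_sub_le_norm_sub_add_norm_sub _ _ _
      _ ≤ s / 2 + s / 2 := by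
        gcongr
        · simpa [Nat.sub_add_cancel hM] using hc (M - 1) (by omega)
        · rw [hcM, ← dist_eq_norm, dist_comm]
          exact hpx'.le
      _ = s := add_halves s
  · simp only [z]
    rw [Int.emod_eq_of_lt (by omega) (by omega), if_pos (by omega), add_sub_cancel]

theorem exists_isPTLe_of_forall_window {x : ℤ → X} {r : ℝ} {L : ℤ} (hL : 0 < L)
    (hwin : ∀ a : ℤ, ∃ o, IsOrbit T o ∧ ∀ j, a ≤ j → j ≤ a + 2 * L → ‖x j - o j‖ ≤ r) :
    ∃ x', IsPTLe T (2 * r / L) x' ∧ ∀ j, ‖x j - x' j‖ ≤ r := by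
  choose W hW hxW using fun k : ℤ => hwin (L * k)
  -- on `[L k, L k + L)` move linearly from the orbit `W (k - 1)` to the orbit `W k`
  let x' : ℤ → X := fun j =>
    W (j / L - 1) j + ((j % L : ℤ) / L : ℝ) • (W (j / L) j - W (j / L - 1) j)
  have hLR : (0 : ℝ) < L := by exact_mod_cast hL
  have hblock : ∀ j, L * (j / L) ≤ j ∧ j < L * (j / L) + L := fun j => by
    have := Int.emod_add_mul_ediv j L
    constructor <;> linarith [Int.emod_nonneg j hL.ne', Int.emod_lt_of_pos j hL]
  refine ⟨x', fun j => ?_, fun j => ?_⟩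
  · obtain ⟨hj, hj'⟩ := hblock j
    set k := j / L
    -- also when `j + 1` starts the next block
    have hnext : x' (j + 1) = W (k - 1) (j + 1) +
        (((j % L : ℤ) + 1) / L : ℝ) • (W k (j + 1) - W (k - 1) (j + 1)) := by
      rcases Int.ediv_emod_add_one_cases j hL with ⟨hq, hr⟩ | ⟨hm, hq, hr⟩
      · simp only [x', hq, hr]
        push_cast
        rfl
      · simp only [x', hq, hr, hm, add_sub_cancel_right, Int.cast_zero, zero_div, zero_smul,
          add_zero]
        rw [show ((L - 1 : ℤ) + 1) / (L : ℝ) = 1 by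
            push_cast; rw [sub_add_cancel, div_self hLR.ne'],
          one_smul, add_sub_cancel]
    have hdef : T (x' j) - x' (j + 1) = -(L : ℝ)⁻¹ • (W k (j + 1) - W (k - 1) (j + 1)) := by
      rw [hnext, (hW _).interp_sub_interp (hW _)]
      congr 1
      field_simp
      ring
    have hW1 : ‖x (j + 1) - W (k - 1) (j + 1)‖ ≤ r := hxW _ _ (by linarith) (by linarith)
    have hW2 : ‖x (j + 1) - W k (j + 1)‖ ≤ r := hxW _ _ (by linarith) (by linarith)
    rw [hdef, norm_smul, norm_neg, norm_inv, Real.norm_of_nonneg hLR.le, inv_mul_eq_div]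
    gcongr
    rw [← sub_sub_sub_cancel_left _ _ (x (j + 1)), two_mul]
    exact norm_sub_le_of_le hW1 hW2
  · obtain ⟨hj, hj'⟩ := hblock j
    exact norm_sub_add_smul_sub_le (hxW _ _ (by linarith) (by linarith))
      (hxW _ _ hj (by linarith))
      ⟨div_nonneg (Int.cast_nonneg (Int.emod_nonneg _ hL.ne')) hLR.le,
        (div_le_one hLR).2 (by exact_mod_cast (Int.emod_lt_of_pos j hL).le)⟩

theorem ShadowsLinearlyIn.exists_halving_of_dense_periodicPts {K : ℝ}
    (hT : ShadowsLinearlyIn T {x | IsPer x} K) (hK : 0 < K) (hD : Dense (periodicPts T))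
    {s : ℝ} (hs : 0 < s) {x : ℤ → X} (hx : IsPTLe T s x) :
    ∃ x', IsPTLe T (s / 2) x' ∧ ∀ j, ‖x j - x' j‖ ≤ K * s := by
  have hN : 4 * K ≤ ⌈4 * K⌉₊ := Nat.le_ceil _
  have hL : (0 : ℤ) < ⌈4 * K⌉₊ := by exact_mod_cast Nat.ceil_pos.2 (by positivity)
  obtain ⟨x', hx', hxx'⟩ := exists_isPTLe_of_forall_window hL fun a => by
    obtain ⟨y, hy, hys, hyx⟩ :=
      exists_isPer_isPTLe_eqOn hD hs hx (by omega : a ≤ a + 2 * (⌈4 * K⌉₊ : ℤ))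
    obtain ⟨o, ho, -, hyo⟩ := hT s hs y hys hy
    exact ⟨o, ho, fun j h h' => hyx j h h' ▸ hyo j⟩
  refine ⟨x', hx'.mono ?_, hxx'⟩
  push_cast
  rw [div_le_iff₀ (by linarith)]
  nlinarith

theorem sp_of_psp [CompleteSpace X] (hD : Dense (periodicPts T)) (h : PSP T) : SP T := by
  obtain ⟨K, hK, hlin⟩ :=
    (psp_iff_shadowsIn_setOf_isPer.1 h).exists_shadowsLinearlyIn fun c _ hx => hx.smul c
  intro ε hε
  refine ⟨ε / (4 * K), by positivity, fun x hx => ?_⟩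
  obtain ⟨o, -, ho, hxo⟩ := exists_isOrbit_of_halving isClosed_univ
    (fun s hs x _ hxs => (hlin.exists_halving_of_dense_periodicPts hK hD hs hxs).imp
      fun _ h => ⟨trivial, h⟩)
    (by positivity) trivial hx.isPTLe
  refine ⟨o, ho, fun j => (hxo j).trans_lt ?_⟩
  field_simp
  linarith

theorem sp_iff_psp [CompleteSpace X] (hD : Dense (periodicPts T)) : SP T ↔ PSP T :=
  ⟨psp_of_sp, sp_of_psp hD⟩

end Shadowing

theorem setOf_pow_apply_eq_self_eq_periodicPts {X : Type*} [NormedAddCommGroup X]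
    [NormedSpace ℝ X] (T : X ≃L[ℝ] X) :
    {v : X | ∃ q : ℕ, 1 ≤ q ∧ ((T : X →L[ℝ] X) ^ q) v = v} = periodicPts T := by
  ext v
  simp [periodicPts, IsPeriodicPt, IsFixedPt, Nat.one_le_iff_ne_zero, pos_iff_ne_zero]

theorem stmt6_general (w : ℤ → ℝ) :
    (∀ (p : ENNReal) [Fact (1 ≤ p)], p ≠ ⊤ →
      ∀ T : LpZ p ≃L[ℝ] LpZ p,
        (∀ (x : LpZ p) (n : ℤ), (T x) n = w (n + 1) * x (n + 1)) →
        Dense {x : LpZ p | ∃ q : ℕ, 1 ≤ q ∧ ((T : LpZ p →L[ℝ] LpZ p) ^ q) x = x} →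
        (SP T ↔ PSP T)) ∧
    (∀ T : C0Z ≃L[ℝ] C0Z,
        (∀ (x : C0Z) (n : ℤ), (T x) n = w (n + 1) * x (n + 1)) →
        Dense {x : C0Z | ∃ q : ℕ, 1 ≤ q ∧ ((T : C0Z →L[ℝ] C0Z) ^ q) x = x} →
        (SP T ↔ PSP T)) := by
  refine ⟨fun p _ _ T _ hD => ?_, fun T _ hD => ?_⟩ <;>
    exact sp_iff_psp (by rwa [← setOf_pow_apply_eq_self_eq_periodicPts])

/-- For an invertible bilateral weighted backward shift on `ℓᵖ(ℤ)` (`1 ≤ p < ∞`) or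
`c₀(ℤ)` with weights bounded and bounded away from zero and with a dense set of
periodic points, the shadowing property is equivalent to the periodic shadowing
property. -/
theorem stmt6 (w : ℤ → ℝ) (hbd : ∃ C : ℝ, ∀ n : ℤ, |w n| ≤ C)
    (hbelow : ∃ c > (0 : ℝ), ∀ n : ℤ, c ≤ |w n|) :
    (∀ (p : ENNReal) [Fact (1 ≤ p)], p ≠ ⊤ →
      ∀ T : LpZ p ≃L[ℝ] LpZ p,
        (∀ (x : LpZ p) (n : ℤ), (T x) n = w (n + 1) * x (n + 1)) →
        Dense {x : LpZ p | ∃ q : ℕ, 1 ≤ q ∧ ((T : LpZ p →L[ℝ] LpZ p) ^ q) x = x} →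
        (SP T ↔ PSP T)) ∧
    (∀ T : C0Z ≃L[ℝ] C0Z,
        (∀ (x : C0Z) (n : ℤ), (T x) n = w (n + 1) * x (n + 1)) →
        Dense {x : C0Z | ∃ q : ℕ, 1 ≤ q ∧ ((T : C0Z →L[ℝ] C0Z) ^ q) x = x} →
        (SP T ↔ PSP T)) :=
  stmt6_general w
end

section
/- Let X be ℓp(ℤ) or c0(ℤ), A ⊆ ℤ, k ∈ ℕ, and P_{A,k} the projection onto coordinates in A + kℤ. If B_w is a bilateral weighted backward shift on X and x is chain recurrent for B_w, then P_{A,k}x is chain recurrent for B_w. -/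
open Finset
open scoped Classical

lemma chainRec_restrict {X : Type*} [NormedAddCommGroup X] [NormedSpace ℝ X]
    (T : X →L[ℝ] X) (co : X → ℤ → ℝ)
    (hext : ∀ u v : X, (∀ i, co u i = co v i) → u = v)
    (hsub : ∀ (u v : X) (i : ℤ), co (u - v) i = co u i - co v i)
    (hT : ∀ (u v : X) (n : ℤ), co u (n + 1) = co v (n + 1) → co (T u) n = co (T v) n)
    (R : Set ℤ → X → X)
    (hco : ∀ (M : Set ℤ) (u : X) (i : ℤ), co (R M u) i = if i ∈ M then co u i else 0)
    (hnorm : ∀ (M : Set ℤ) (u : X), ‖R M u‖ ≤ ‖u‖)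
    (x : X) (S : Set ℤ)
    (htail : ∀ ε > (0 : ℝ), ∃ N : ℕ, ∀ M : Set ℤ, (∀ i ∈ M, (N : ℤ) < |i|) → ‖R M x‖ < ε)
    (hx : ChainRec T x) : ChainRec T (R S x) := by
  have co0 : ∀ i, co (0 : X) i = 0 := by
    intro i
    have h := hsub 0 0 i
    rw [sub_zero] at h
    linarith
  have Rsub : ∀ (M : Set ℤ) (u v : X), R M u - R M v = R M (u - v) := by
    intro M u v
    apply hext
    intro i
    rw [hsub, hco, hco, hco, hsub]
    split_ifs <;> simp
  have RT : ∀ (M : Set ℤ) (u : X), T (R M u) = R {i : ℤ | i + 1 ∈ M} (T u) := by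
    intro M u
    apply hext
    intro n
    rw [hco]
    simp only [Set.mem_setOf_eq]
    by_cases h : n + 1 ∈ M
    · rw [if_pos h]
      exact hT _ _ _ (by rw [hco, if_pos h])
    · rw [if_neg h]
      have h0 : co (T (R M u)) n = co (T (0 : X)) n :=
        hT _ _ _ (by rw [hco, if_neg h, co0])
      rw [h0, map_zero, co0]
  intro δ hδ
  set C := ‖T‖ with hCdef
  have hC : 0 ≤ C := norm_nonneg T
  set δ₁ := δ / (2 * C + 2) with hδ₁def
  have hd1 : 0 < δ₁ := div_pos hδ (by linarith)
  have hδbig : (2 * C + 2) * δ₁ = δ := by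
    rw [hδ₁def]; field_simp
  have hCd : 0 ≤ C * δ₁ := mul_nonneg hC hd1.le
  obtain ⟨k', c, hk', hc0, hck, hstep⟩ := hx δ₁ hd1
  set c' : ℕ → X := fun j => c (j % k') with hc'def
  have hc'mul : ∀ m : ℕ, c' (m * k') = x := by
    intro m
    show c (m * k' % k') = x
    rw [Nat.mul_mod_left]
    exact hc0
  have hmod : ∀ j : ℕ, (j + 1) % k' = (j % k' + 1) % k' := by
    intro j
    conv_lhs => rw [← Nat.div_add_mod j k', Nat.add_assoc, Nat.mul_add_mod]
  have hstep' : ∀ j : ℕ, ‖T (c' j) - c' (j + 1)‖ < δ₁ := by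
    intro j
    have h1 : j % k' < k' := Nat.mod_lt _ (by omega)
    have hval : c' (j + 1) = c (j % k' + 1) := by
      by_cases h2 : j % k' + 1 = k'
      · have h3 : (j + 1) % k' = 0 := by rw [hmod, h2, Nat.mod_self]
        show c ((j + 1) % k') = c (j % k' + 1)
        rw [h3, hc0, h2, hck]
      · have h3 : (j + 1) % k' = j % k' + 1 := by
          rw [hmod]; exact Nat.mod_eq_of_lt (by omega)
        show c ((j + 1) % k') = c (j % k' + 1)
        rw [h3]
    rw [hval]
    exact hstep _ h1
  obtain ⟨N, hN⟩ := htail δ₁ hd1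
  set Fm : ℤ → Set ℤ := fun t => {i : ℤ | i + t ∈ S ∧ |i + t| ≤ (N : ℤ)} with hFmdef
  have hFmmem : ∀ t i : ℤ, i ∈ Fm t ↔ i + t ∈ S ∧ |i + t| ≤ (N : ℤ) := fun t i => Iff.rfl
  have hFshift : ∀ t : ℤ, {i : ℤ | i + 1 ∈ Fm t} = Fm (t + 1) := by
    intro t
    ext i
    have h : i + 1 + t = i + (t + 1) := by ring
    simp only [hFmdef, Set.mem_setOf_eq, h]
  have hstepg : ∀ (t : ℤ) (j : ℕ),
      ‖T (R (Fm t) (c' j)) - R (Fm (t + 1)) (c' (j + 1))‖ < δ₁ := by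
    intro t j
    rw [RT, hFshift, Rsub]
    exact lt_of_le_of_lt (hnorm _ _) (hstep' j)
  have hfar : ∀ t : ℤ, 2 * (N : ℤ) < |t| → ‖R (Fm t) x‖ < δ₁ := by
    intro t ht
    apply hN
    intro i hi
    obtain ⟨-, h2⟩ := (hFmmem t i).mp hi
    rw [abs_le] at h2
    rw [lt_abs] at ht ⊢
    omega
  have hyF : ‖R S x - R (Fm 0) x‖ < δ₁ := by
    have heq : R S x - R (Fm 0) x = R {i : ℤ | i ∈ S ∧ (N : ℤ) < |i|} x := by
      apply hext
      intro i
      rw [hsub, hco, hco, hco]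
      by_cases h1 : i ∈ S <;> by_cases h2 : |i| ≤ (N : ℤ)
      · simp [hFmdef, h1, h2, not_lt.mpr h2]
      · simp [hFmdef, h1, h2, not_le.mp h2]
      · simp [hFmdef, h1]
      · simp [hFmdef, h1]
    rw [heq]
    apply hN
    intro i hi
    exact hi.2
  set L := (2 * N + 2) * k' with hLdef
  have hLk : 2 * N + 2 ≤ L := by
    calc 2 * N + 2 = (2 * N + 2) * 1 := by ring
    _ ≤ (2 * N + 2) * k' := Nat.mul_le_mul_left _ hk'
  have hL2 : 2 ≤ L := by omega
  have hLN : 2 * (N : ℤ) < (L : ℤ) := by exact_mod_cast by omega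
  have hc'L : c' L = x := hc'mul _
  have hc'2L : c' (2 * L) = x := by
    have h : 2 * L = 2 * (2 * N + 2) * k' := by rw [hLdef]; ring
    rw [h]
    exact hc'mul _
  set d : ℕ → X := fun j =>
    if j = 0 ∨ j = 2 * L then R S x
    else R (Fm (if j ≤ L then (j : ℤ) else (j : ℤ) - 2 * L)) (c' j) with hddef
  have hdval : ∀ i : ℕ, 1 ≤ i → i ≤ L → d i = R (Fm (i : ℤ)) (c' i) := by
    intro i h1 h2
    show (if i = 0 ∨ i = 2 * L then R S x else _) = _
    rw [if_neg (by omega), if_pos h2]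
  have hdval2 : ∀ i : ℕ, L < i → i < 2 * L → d i = R (Fm ((i : ℤ) - 2 * L)) (c' i) := by
    intro i h1 h2
    show (if i = 0 ∨ i = 2 * L then R S x else _) = _
    rw [if_neg (by omega), if_neg (by omega)]
  have tri : ∀ a b e : X, ‖a - e‖ ≤ ‖a - b‖ + ‖b - e‖ := fun a b e => by
    simpa [dist_eq_norm] using dist_triangle a b e
  have hTop : ∀ u v : X, ‖T u - T v‖ ≤ C * ‖u - v‖ := fun u v => by
    rw [← map_sub]; exact T.le_opNorm _
  refine ⟨2 * L, d, by omega, by simp [hddef], by simp [hddef], ?_⟩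
  intro j hj
  have hd1' : δ₁ ≤ δ := by nlinarith
  rcases eq_or_ne j 0 with rfl | hj0
  · have hd0 : d 0 = R S x := by simp [hddef]
    have hd1v : d 1 = R (Fm 1) (c' 1) := by
      rw [hdval 1 le_rfl (by omega)]
      norm_num
    rw [hd0, hd1v]
    have hc0' : c' 0 = x := by
      have := hc'mul 0
      simpa using this
    have hA : ‖T (R S x) - T (R (Fm 0) (c' 0))‖ ≤ C * δ₁ := by
      refine (hTop _ _).trans ?_
      rw [hc0']
      exact mul_le_mul_of_nonneg_left hyF.le hC
    have hB : ‖T (R (Fm 0) (c' 0)) - R (Fm 1) (c' 1)‖ < δ₁ := by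
      have := hstepg 0 0
      norm_num at this
      exact this
    have := tri (T (R S x)) (T (R (Fm 0) (c' 0))) (R (Fm 1) (c' 1))
    linarith
  rcases eq_or_ne j L with rfl | hjL
  · rw [hdval L (by omega) le_rfl, hdval2 (L + 1) (by omega) (by omega)]
    have hcast : ((L + 1 : ℕ) : ℤ) - 2 * L = -(L : ℤ) + 1 := by push_cast; ring
    rw [hcast, hc'L]
    have hA : ‖T (R (Fm (L : ℤ)) x) - T (R (Fm (-(L : ℤ))) x)‖ ≤ C * (δ₁ + δ₁) := by
      refine (hTop _ _).trans (mul_le_mul_of_nonneg_left ?_ hC)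
      refine (norm_sub_le _ _).trans ?_
      have f1 := hfar (L : ℤ) (by rwa [abs_of_nonneg (by positivity)])
      have f2 := hfar (-(L : ℤ)) (by rwa [abs_neg, abs_of_nonneg (by positivity)])
      linarith
    have hB : ‖T (R (Fm (-(L : ℤ))) x) - R (Fm (-(L : ℤ) + 1)) (c' (L + 1))‖ < δ₁ := by
      have := hstepg (-(L : ℤ)) L
      rwa [hc'L] at this
    have := tri (T (R (Fm (L : ℤ)) x)) (T (R (Fm (-(L : ℤ))) x)) (R (Fm (-(L : ℤ) + 1)) (c' (L + 1)))
    linarith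
  rcases eq_or_ne (j + 1) (2 * L) with hE | hE2
  · have hjz : (j : ℤ) - 2 * L = -1 := by omega
    rw [hdval2 j (by omega) (by omega), hjz]
    have hd2L : d (j + 1) = R S x := by
      show (if j + 1 = 0 ∨ j + 1 = 2 * L then R S x else _) = _
      rw [if_pos (Or.inr hE)]
    rw [hd2L]
    have hB : ‖T (R (Fm (-1)) (c' j)) - R (Fm 0) (c' (j + 1))‖ < δ₁ := by
      have := hstepg (-1) j
      norm_num at this
      exact this
    have hA : ‖R (Fm 0) (c' (j + 1)) - R S x‖ < δ₁ := by
      rw [hE, hc'2L, norm_sub_rev]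
      exact hyF
    have := tri (T (R (Fm (-1)) (c' j))) (R (Fm 0) (c' (j + 1))) (R S x)
    linarith
  by_cases hj2 : j + 1 ≤ L
  · rw [hdval j (by omega) (by omega), hdval (j + 1) (by omega) hj2]
    have := hstepg (j : ℤ) j
    have hcast : ((j : ℤ) + 1) = ((j + 1 : ℕ) : ℤ) := by push_cast; ring
    rw [hcast] at this
    linarith
  · rw [hdval2 j (by omega) (by omega), hdval2 (j + 1) (by omega) (by omega)]
    have := hstepg ((j : ℤ) - 2 * L) j
    have hcast : ((j : ℤ) - 2 * L) + 1 = ((j + 1 : ℕ) : ℤ) - 2 * L := by push_cast; ring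
    rw [hcast] at this
    linarith

/-- If `B_w` is a bilateral weighted backward shift on `ℓᵖ(ℤ)` or `c₀(ℤ)` (weights bounded
and bounded away from zero), `P_{A,k}` is the coordinate projection onto `A + kℤ`, and
`x` is chain recurrent for `B_w`, then `P_{A,k} x` is chain recurrent for `B_w`. -/
theorem stmt8 (w : ℤ → ℝ) (hbd : ∃ C : ℝ, ∀ n : ℤ, |w n| ≤ C)
    (hbelow : ∃ c > (0 : ℝ), ∀ n : ℤ, c ≤ |w n|) (A : Set ℤ) (k : ℕ) :
    (∀ (p : ENNReal) [Fact (1 ≤ p)], p ≠ ⊤ →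
      ∀ T : LpZ p →L[ℝ] LpZ p,
        (∀ (x : LpZ p) (n : ℤ), (T x) n = w (n + 1) * x (n + 1)) →
        ∀ P : LpZ p →L[ℝ] LpZ p,
          (∀ (x : LpZ p) (i : ℤ),
            (P x) i = if ∃ a ∈ A, ∃ m : ℤ, i = a + (k : ℤ) * m then x i else 0) →
          ∀ x : LpZ p, ChainRec T x → ChainRec T (P x)) ∧
    (∀ T : C0Z →L[ℝ] C0Z,
        (∀ (x : C0Z) (n : ℤ), (T x) n = w (n + 1) * x (n + 1)) →
        ∀ P : C0Z →L[ℝ] C0Z,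
          (∀ (x : C0Z) (i : ℤ),
            (P x) i = if ∃ a ∈ A, ∃ m : ℤ, i = a + (k : ℤ) * m then x i else 0) →
          ∀ x : C0Z, ChainRec T x → ChainRec T (P x)) := by
  constructor
  · intro p _inst hp T hTco P hPco x hx
    have hq : 0 < p.toReal := ENNReal.toReal_pos (zero_lt_one.trans_le Fact.out).ne' hp
    have hmem : ∀ (M : Set ℤ) (u : LpZ p), Memℓp (fun i => if i ∈ M then u i else 0) p := by
      intro M u
      apply memℓp_gen
      refine Summable.of_nonneg_of_le (fun i => Real.rpow_nonneg (norm_nonneg _) _)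
        (fun i => ?_) ((lp.memℓp u).summable hq)
      refine Real.rpow_le_rpow (norm_nonneg _) ?_ hq.le
      split_ifs <;> simp
    set R : Set ℤ → LpZ p → LpZ p := fun M u => ⟨fun i => if i ∈ M then u i else 0, hmem M u⟩
      with hRdef
    have hRapp : ∀ (M : Set ℤ) (u : LpZ p) (i : ℤ), (R M u) i = if i ∈ M then u i else 0 :=
      fun M u i => rfl
    have hext : ∀ u v : LpZ p, (∀ i, u i = v i) → u = v := fun u v h => lp.ext (funext h)
    have hsub : ∀ (u v : LpZ p) (i : ℤ), (u - v) i = u i - v i := fun u v i => rfl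
    have hnorm : ∀ (M : Set ℤ) (u : LpZ p), ‖R M u‖ ≤ ‖u‖ := by
      intro M u
      refine lp.norm_le_of_tsum_le hq (norm_nonneg _) ?_
      rw [lp.norm_rpow_eq_tsum hq u]
      refine Summable.tsum_le_tsum (fun i => ?_) ((lp.memℓp _).summable hq) ((lp.memℓp u).summable hq)
      refine Real.rpow_le_rpow (norm_nonneg _) ?_ hq.le
      rw [hRapp]
      split_ifs <;> simp
    have htail : ∀ ε > (0 : ℝ), ∃ N : ℕ, ∀ M : Set ℤ, (∀ i ∈ M, (N : ℤ) < |i|) →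
        ‖R M x‖ < ε := by
      intro ε hε
      have hs := lp.hasSum_single hp x
      have h2 : ∀ᶠ s : Finset ℤ in Filter.atTop,
          ‖x - ∑ i ∈ s, lp.single p i (x i)‖ < ε := by
        have h3 := Metric.tendsto_nhds.mp hs ε hε
        refine h3.mono fun s hs' => ?_
        rwa [dist_eq_norm, norm_sub_rev] at hs'
      obtain ⟨s, hs'⟩ := h2.exists
      refine ⟨s.sup Int.natAbs, fun M hM => ?_⟩
      have hRs : x - ∑ i ∈ s, lp.single p i (x i) = R {i : ℤ | i ∉ s} x := by
        apply hext
        intro j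
        rw [hRapp]
        have hcoe : (x - ∑ i ∈ s, lp.single p i (x i)) j
            = x j - (∑ i ∈ s, lp.single p i (x i)) j := rfl
        have hsumapp : (∑ i ∈ s, lp.single p i (x i)) j = if j ∈ s then x j else 0 := by
          simp only [lp.coeFn_sum, Finset.sum_apply, lp.single_apply]
          simp [Finset.sum_dite_eq, eq_comm]
        rw [hcoe, hsumapp]
        by_cases hjs : j ∈ s <;> simp [hjs]
      have hMs : R M x = R M (R {i : ℤ | i ∉ s} x) := by
        apply hext
        intro j
        rw [hRapp, hRapp, hRapp]
        by_cases hjM : j ∈ M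
        · have hjs : j ∈ {i : ℤ | i ∉ s} := by
            intro hjs
            have h1 := Finset.le_sup (f := Int.natAbs) hjs
            have h2 := hM j hjM
            rw [Int.abs_eq_natAbs] at h2
            omega
          simp [hjM, hjs]
        · simp [hjM]
      calc ‖R M x‖ = ‖R M (R {i : ℤ | i ∉ s} x)‖ := by rw [← hMs]
        _ ≤ ‖R {i : ℤ | i ∉ s} x‖ := hnorm _ _
        _ < ε := by rw [← hRs]; exact hs'
    have hPx : P x = R {i : ℤ | ∃ a ∈ A, ∃ m : ℤ, i = a + (k : ℤ) * m} x := by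
      apply hext
      intro i
      rw [hPco, hRapp]
      simp only [Set.mem_setOf_eq]
    rw [hPx]
    exact chainRec_restrict T (fun u i => u i) hext hsub
      (fun u v n h => by show (T u) n = (T v) n; rw [hTco, hTco]; exact congrArg (fun t => w (n + 1) * t) h) R hRapp hnorm x _ htail hx
  · intro T hTco P hPco x hx
    have hcof : Filter.cocompact ℤ = Filter.cofinite := Filter.cocompact_eq_cofinite ℤ
    have hmem : ∀ (M : Set ℤ) (u : C0Z),
        Filter.Tendsto (fun i : ℤ => if i ∈ M then u i else 0) (Filter.cocompact ℤ)
          (nhds 0) := by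
      intro M u
      apply squeeze_zero_norm (a := fun i => ‖u i‖)
      · intro i
        split_ifs <;> simp
      · have h := u.zero_at_infty'
        simpa using h.norm
    set R : Set ℤ → C0Z → C0Z := fun M u =>
      ⟨⟨fun i => if i ∈ M then u i else 0, continuous_of_discreteTopology⟩, hmem M u⟩
      with hRdef
    have hRapp : ∀ (M : Set ℤ) (u : C0Z) (i : ℤ), (R M u) i = if i ∈ M then u i else 0 :=
      fun M u i => rfl
    have hext : ∀ u v : C0Z, (∀ i, u i = v i) → u = v := fun u v h =>
      ZeroAtInftyContinuousMap.ext h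
    have hsub : ∀ (u v : C0Z) (i : ℤ), (u - v) i = u i - v i := fun u v i => rfl
    have hnormle : ∀ (u : C0Z) (Cb : ℝ), 0 ≤ Cb → (∀ i, ‖u i‖ ≤ Cb) → ‖u‖ ≤ Cb := by
      intro u Cb h0 hb
      rw [← ZeroAtInftyContinuousMap.norm_toBCF_eq_norm]
      exact (BoundedContinuousFunction.norm_le h0).mpr hb
    have hptle : ∀ (u : C0Z) (i : ℤ), ‖u i‖ ≤ ‖u‖ := by
      intro u i
      rw [← ZeroAtInftyContinuousMap.norm_toBCF_eq_norm]
      exact BoundedContinuousFunction.norm_coe_le_norm u.toBCF i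
    have hnorm : ∀ (M : Set ℤ) (u : C0Z), ‖R M u‖ ≤ ‖u‖ := by
      intro M u
      refine hnormle _ _ (norm_nonneg u) fun i => ?_
      rw [hRapp]
      split_ifs
      · exact hptle u i
      · simp
    have htail : ∀ ε > (0 : ℝ), ∃ N : ℕ, ∀ M : Set ℤ, (∀ i ∈ M, (N : ℤ) < |i|) →
        ‖R M x‖ < ε := by
      intro ε hε
      have hz : Filter.Tendsto (⇑x) Filter.cofinite (nhds 0) := by
        rw [← hcof]
        exact x.zero_at_infty'
      have hev : {i : ℤ | ¬ ‖x i‖ < ε / 2}.Finite := by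
        have h1 := Metric.tendsto_nhds.mp hz (ε / 2) (by linarith)
        rw [Filter.eventually_cofinite] at h1
        refine h1.subset fun i hi => ?_
        simpa [dist_zero_right] using hi
      refine ⟨hev.toFinset.sup Int.natAbs, fun M hM => ?_⟩
      have hb : ‖R M x‖ ≤ ε / 2 := by
        refine hnormle _ _ (by linarith) fun i => ?_
        rw [hRapp]
        split_ifs with hi
        · by_contra hcon
          push_neg at hcon
          have his : i ∈ hev.toFinset := by
            rw [Set.Finite.mem_toFinset]
            simp only [Set.mem_setOf_eq, not_lt]
            linarith
          have h1 := Finset.le_sup (f := Int.natAbs) his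
          have h2 := hM i hi
          rw [Int.abs_eq_natAbs] at h2
          omega
        · simp
          linarith
      linarith
    have hPx : P x = R {i : ℤ | ∃ a ∈ A, ∃ m : ℤ, i = a + (k : ℤ) * m} x := by
      apply hext
      intro i
      rw [hPco, hRapp]
      simp only [Set.mem_setOf_eq]
    rw [hPx]
    exact chainRec_restrict T (fun u i => u i) hext hsub
      (fun u v n h => by show (T u) n = (T v) n; rw [hTco, hTco]; exact congrArg (fun t => w (n + 1) * t) h) R hRapp hnorm x _ htail hx
end

section
/- Let B_w be a bilateral weighted backward shift on ℓp(ℤ) or c0(ℤ) with bounded weights bounded away from zero, and let (x_i)_{i=0}^n be a δ-pseudotrajectory of B_w. Then for any A ⊆ ℤ and k ∈ ℕ, the sequence (P_{A−i,k} x_i)_{i=0}^n is also a δ-pseudotrajectory of B_w. -/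
open Finset

private lemma cond_iff_aux (A : Set ℤ) (k i : ℕ) (j : ℤ) :
    (∃ a ∈ (fun a => a - (i:ℤ)) '' A, ∃ m : ℤ, j + 1 = a + (k:ℤ) * m) ↔
    (∃ a ∈ (fun a => a - ((i:ℤ)+1)) '' A, ∃ m : ℤ, j = a + (k:ℤ) * m) := by
  constructor
  · rintro ⟨a, ⟨a₀, ha, rfl⟩, m, hm⟩
    exact ⟨a₀ - ((i:ℤ)+1), ⟨a₀, ha, rfl⟩, m, by simp only at hm; linarith⟩
  · rintro ⟨a, ⟨a₀, ha, rfl⟩, m, hm⟩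
    exact ⟨a₀ - (i:ℤ), ⟨a₀, ha, rfl⟩, m, by simp only at hm; linarith⟩

open scoped Classical in
/-- If `(x_i)_{i=0}^n` is a `δ`-pseudotrajectory of a bilateral weighted backward shift
`B_w` on `ℓᵖ(ℤ)` or `c₀(ℤ)`, then so is `(P_{A−i,k} x_i)_{i=0}^n`, where `P_{A,k}` is the
coordinate projection onto `A + kℤ`. -/
theorem stmt9 (w : ℤ → ℝ) (hbd : ∃ C : ℝ, ∀ n : ℤ, |w n| ≤ C)
    (hbelow : ∃ c > (0 : ℝ), ∀ n : ℤ, c ≤ |w n|) (A : Set ℤ) (k : ℕ) (δ : ℝ) :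
    (∀ (p : ENNReal) [Fact (1 ≤ p)], p ≠ ⊤ →
      ∀ T : LpZ p →L[ℝ] LpZ p,
        (∀ (x : LpZ p) (j : ℤ), (T x) j = w (j + 1) * x (j + 1)) →
        ∀ P : Set ℤ → LpZ p →L[ℝ] LpZ p,
          (∀ (B : Set ℤ) (x : LpZ p) (i : ℤ),
            (P B x) i = if ∃ a ∈ B, ∃ m : ℤ, i = a + (k : ℤ) * m then x i else 0) →
          ∀ (n : ℕ) (x : ℕ → LpZ p), (∀ i < n, ‖T (x i) - x (i + 1)‖ < δ) →
            ∀ i < n, ‖T (P ((fun a => a - (i : ℤ)) '' A) (x i)) -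
              P ((fun a => a - ((i : ℤ) + 1)) '' A) (x (i + 1))‖ < δ) ∧
    (∀ T : C0Z →L[ℝ] C0Z,
        (∀ (x : C0Z) (j : ℤ), (T x) j = w (j + 1) * x (j + 1)) →
        ∀ P : Set ℤ → C0Z →L[ℝ] C0Z,
          (∀ (B : Set ℤ) (x : C0Z) (i : ℤ),
            (P B x) i = if ∃ a ∈ B, ∃ m : ℤ, i = a + (k : ℤ) * m then x i else 0) →
          ∀ (n : ℕ) (x : ℕ → C0Z), (∀ i < n, ‖T (x i) - x (i + 1)‖ < δ) →
            ∀ i < n, ‖T (P ((fun a => a - (i : ℤ)) '' A) (x i)) -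
              P ((fun a => a - ((i : ℤ) + 1)) '' A) (x (i + 1))‖ < δ) := by
  constructor
  · intro p _ hp T hT P hP n x hx i hi
    set B := (fun a => a - (i:ℤ)) '' A
    set B' := (fun a => a - ((i:ℤ)+1)) '' A
    have hne0 : p ≠ 0 := (lt_of_lt_of_le zero_lt_one (Fact.out : 1 ≤ p)).ne'
    have hpt : 0 < p.toReal := ENNReal.toReal_pos hne0 hp
    have key : T (P B (x i)) = P B' (T (x i)) := by
      apply lp.ext; funext j
      rw [hT, hP, hP]
      by_cases h : ∃ a ∈ B', ∃ m : ℤ, j = a + (k:ℤ) * m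
      · rw [if_pos ((cond_iff_aux A k i j).mpr h), if_pos h, hT]
      · rw [if_neg (fun hc => h ((cond_iff_aux A k i j).mp hc)), if_neg h, mul_zero]
    have ptle : ∀ (y : LpZ p) (j : ℤ), ‖(P B' y) j‖ ≤ ‖y j‖ := by
      intro y j
      rw [hP]; split <;> simp
    have bound : ∀ y : LpZ p, ‖P B' y‖ ≤ ‖y‖ := by
      intro y
      refine lp.norm_le_of_tsum_le hpt (norm_nonneg y) ?_
      rw [lp.norm_rpow_eq_tsum hpt y]
      refine Summable.tsum_le_tsum (fun j => Real.rpow_le_rpow (norm_nonneg _) (ptle y j) hpt.le)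
        (Summable.of_nonneg_of_le (fun j => Real.rpow_nonneg (norm_nonneg _) _)
          (fun j => Real.rpow_le_rpow (norm_nonneg _) (ptle y j) hpt.le)
          ((lp.memℓp y).summable hpt)) ((lp.memℓp y).summable hpt)
    have eq2 : T (P B (x i)) - P B' (x (i+1)) = P B' (T (x i) - x (i+1)) := by
      rw [key, ← map_sub]
    rw [eq2]
    exact lt_of_le_of_lt (bound _) (hx i hi)
  · intro T hT P hP n x hx i hi
    set B := (fun a => a - (i:ℤ)) '' A
    set B' := (fun a => a - ((i:ℤ)+1)) '' A
    have key : T (P B (x i)) = P B' (T (x i)) := by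
      ext j
      rw [hT, hP, hP]
      by_cases h : ∃ a ∈ B', ∃ m : ℤ, j = a + (k:ℤ) * m
      · rw [if_pos ((cond_iff_aux A k i j).mpr h), if_pos h, hT]
      · rw [if_neg (fun hc => h ((cond_iff_aux A k i j).mp hc)), if_neg h, mul_zero]
    have bound : ∀ y : C0Z, ‖P B' y‖ ≤ ‖y‖ := by
      intro y
      rw [← ZeroAtInftyContinuousMap.norm_toBCF_eq_norm]
      refine (BoundedContinuousFunction.norm_le (norm_nonneg y)).mpr fun j => ?_
      show ‖(P B' y) j‖ ≤ ‖y‖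
      rw [hP]
      split
      · rw [← ZeroAtInftyContinuousMap.norm_toBCF_eq_norm]
        exact y.toBCF.norm_coe_le_norm j
      · simp
    have eq2 : T (P B (x i)) - P B' (x (i+1)) = P B' (T (x i) - x (i+1)) := by
      rw [key, ← map_sub]
    rw [eq2]
    exact lt_of_le_of_lt (bound _) (hx i hi)
end

section
/- Let X be a normed space and T an invertible continuous linear operator. The following are equivalent: (i) for every ε > 0 there is δ > 0 such that every periodic δ-pseudotrajectory of T is contained in B(0, ε); (ii) for every ε > 0 there is δ > 0 such that every periodic δ-pseudotrajectory of T containing 0 as a term is contained in B(0, ε). -/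
/-!
Multiply a periodic `δ`-pseudotrajectory `x` of a linear map `T` termwise by a slowly varying
periodic cutoff `t` that equals `1` on a whole period of `x` and vanishes somewhere: the result
is a periodic pseudotrajectory through `0` containing every term of `x`. Its errors are
`t j • (T x j - x (j+1)) + (t j - t (j+1)) • x (j+1)`; by periodicity the largest error of `x`
is still `< δ` and `x` is bounded, so a cutoff of small enough variation leaves room for the
second term.
-/

open Function Real

theorem Function.Periodic.exists_forall_le {α β : Type*} [AddCommGroup α] [LinearOrder α]
    [IsOrderedAddMonoid α] [Archimedean α] [LocallyFiniteOrder α] [LinearOrder β]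
    {f : α → β} {c : α} (hf : Periodic f c) (hc : 0 < c) : ∃ a₀, ∀ a, f a ≤ f a₀ := by
  obtain ⟨a₀, -, hmax⟩ :=
    Set.exists_max_image (Set.Ico 0 c) f (Set.finite_Ico 0 c) ⟨0, le_rfl, hc⟩
  refine ⟨a₀, fun a => ?_⟩
  obtain ⟨b, hb, hab⟩ := hf.exists_mem_Ico₀ hc a
  exact hab ▸ hmax b hb

theorem norm_map_smul_sub_smul_le {𝕜 E F : Type*} [NormedField 𝕜] [SeminormedAddCommGroup E]
    [NormedSpace 𝕜 E] [FunLike F E E] [LinearMapClass F 𝕜 E E] (T : F) (a b : 𝕜) (u v : E) :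
    ‖T (a • u) - b • v‖ ≤ ‖a‖ * ‖T u - v‖ + ‖a - b‖ * ‖v‖ := by
  have hsplit : T (a • u) - b • v = a • (T u - v) + (a - b) • v := by
    rw [map_smul, smul_sub, sub_smul]; abel
  rw [hsplit, ← norm_smul, ← norm_smul]
  exact norm_add_le _ _

noncomputable def periodicCutoff (L x : ℝ) : ℝ :=
  min 1 (1 - cos (2 * π * x / L))

section periodicCutoff

variable (L : ℝ)

theorem periodicCutoff_nonneg (x : ℝ) : 0 ≤ periodicCutoff L x :=
  le_min zero_le_one (sub_nonneg.2 (cos_le_one _))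

theorem periodicCutoff_le_one (x : ℝ) : periodicCutoff L x ≤ 1 :=
  min_le_left _ _

@[simp]
theorem periodicCutoff_zero : periodicCutoff L 0 = 0 := by
  simp [periodicCutoff]

theorem periodicCutoff_periodic : Periodic (periodicCutoff L) L := by
  intro x
  rcases eq_or_ne L 0 with rfl | hL
  · rw [add_zero]
  · simp only [periodicCutoff, mul_add, add_div, mul_div_assoc, div_self hL, mul_one,
      cos_add_two_pi]

theorem abs_periodicCutoff_sub_le (x y : ℝ) :
    |periodicCutoff L x - periodicCutoff L y| ≤ 2 * π / |L| * |x - y| :=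
  calc |periodicCutoff L x - periodicCutoff L y|
      ≤ max |1 - 1| |(1 - cos (2 * π * x / L)) - (1 - cos (2 * π * y / L))| :=
        abs_min_sub_min_le_max _ _ _ _
    _ = |cos (2 * π * y / L) - cos (2 * π * x / L)| := by
        rw [sub_self, abs_zero, max_eq_right (abs_nonneg _), sub_sub_sub_cancel_left]
    _ ≤ |2 * π * y / L - 2 * π * x / L| := abs_cos_sub_cos_le _ _
    _ = 2 * π / |L| * |x - y| := by
        rw [← sub_div, ← mul_sub, abs_div, abs_mul, abs_of_pos two_pi_pos, abs_sub_comm]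
        ring

end periodicCutoff

theorem periodicCutoff_eq_one {L x : ℝ} (hL : 0 < L) (h₁ : L / 4 ≤ x) (h₂ : x ≤ 3 * L / 4) :
    periodicCutoff L x = 1 := by
  refine min_eq_left ?_
  have hcos : cos (2 * π * x / L) ≤ 0 := by
    apply cos_nonpos_of_pi_div_two_le_of_le
    · rw [le_div_iff₀ hL]; nlinarith [pi_pos]
    · rw [div_le_iff₀ hL]; nlinarith [pi_pos]
  linarith

theorem exists_periodic_pseudotrajectory_through_zero {X F : Type*} [SeminormedAddCommGroup X]
    [NormedSpace ℝ X] [FunLike F X X] [LinearMapClass F ℝ X X] (T : F) {δ : ℝ} {x : ℤ → X}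
    {p : ℕ} (hp : 1 ≤ p) (hx : Periodic x p) (hT : ∀ j, ‖T (x j) - x (j + 1)‖ < δ) :
    ∃ y : ℤ → X, (∀ j, ‖T (y j) - y (j + 1)‖ < δ) ∧ (∃ L : ℕ, 1 ≤ L ∧ Periodic y L) ∧
      y 0 = 0 ∧ ∀ j, ∃ i, x j = y i := by
  have hp' : (0 : ℤ) < p := by exact_mod_cast hp
  obtain ⟨j₁, he⟩ := Periodic.exists_forall_le (f := fun j => ‖T (x j) - x (j + 1)‖)
    (fun j => by dsimp only; rw [add_right_comm, hx, hx]) hp'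
  obtain ⟨j₂, hM⟩ := (hx.comp norm).exists_forall_le hp'
  set e := ‖T (x j₁) - x (j₁ + 1)‖
  set M := ‖x j₂‖
  have he_lt : e < δ := hT j₁
  obtain ⟨k, hk⟩ := exists_nat_gt (2 * π * M / (δ - e))
  set L : ℕ := 4 * (k + 1) * p with hL_def
  have hL : (0 : ℝ) < L := by positivity
  have hkL : (k : ℝ) < L := by
    rw [hL_def]; push_cast
    nlinarith [(by exact_mod_cast hp : (1 : ℝ) ≤ p)]
  set t : ℤ → ℝ := fun j => periodicCutoff L j
  refine ⟨fun j => t j • x j, fun j => ?_, ⟨L, Nat.cast_pos.mp hL, fun j => ?_⟩, by simp [t],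
    fun j => ?_⟩
  · have hvar : ‖t j - t (j + 1)‖ ≤ 2 * π / L := by
      simpa [t, abs_of_pos hL] using abs_periodicCutoff_sub_le L j (j + 1)
    have hslack : 2 * π / L * M < δ - e := by
      rw [div_mul_eq_mul_div, div_lt_iff₀ hL]
      rw [div_lt_iff₀ (sub_pos.2 he_lt)] at hk
      nlinarith [norm_nonneg (x j₂), hkL]
    calc ‖T (t j • x j) - t (j + 1) • x (j + 1)‖
        ≤ ‖t j‖ * ‖T (x j) - x (j + 1)‖ + ‖t j - t (j + 1)‖ * ‖x (j + 1)‖ :=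
          norm_map_smul_sub_smul_le T _ _ _ _
      _ ≤ 1 * e + 2 * π / L * M := by
          gcongr
          · rw [Real.norm_of_nonneg (periodicCutoff_nonneg _ _)]
            exact periodicCutoff_le_one _ _
          · exact he j
          · exact hM (j + 1)
      _ < δ := by linarith
  · have hxL : x (j + L) = x j := by
      simpa [hL_def, mul_assoc] using (hx.nat_mul (4 * (k + 1))) j
    simp only [t, hxL, Int.cast_add, Int.cast_natCast, periodicCutoff_periodic L j]
  · obtain ⟨i, ⟨hi₁, hi₂⟩, hxi⟩ := hx.exists_mem_Ico hp' j ((k + 1) * p)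
    refine ⟨i, ?_⟩
    have hi₁' : ((k + 1) * p : ℝ) ≤ i := by exact_mod_cast hi₁
    have hi₂' : (i : ℝ) < (k + 1) * p + p := by exact_mod_cast hi₂
    have hti : t i = 1 := by
      refine periodicCutoff_eq_one hL ?_ ?_ <;> rw [hL_def] <;> push_cast <;> nlinarith
    show x j = t i • x i
    rw [hti, one_smul, hxi]
/-- For an invertible continuous linear operator `T` on a normed space, the following are
equivalent: (i) for every `ε > 0` there is `δ > 0` such that every periodic
`δ`-pseudotrajectory of `T` is contained in `B(0, ε)`; (ii) the same with the
pseudotrajectories restricted to those containing `0` as a term. -/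
theorem stmt12 {X : Type*} [NormedAddCommGroup X] [NormedSpace ℝ X]
    (T : X ≃L[ℝ] X) :
    (∀ ε > (0 : ℝ), ∃ δ > (0 : ℝ), ∀ x : ℤ → X,
      (∀ j : ℤ, ‖T (x j) - x (j + 1)‖ < δ) →
      (∃ p : ℕ, 1 ≤ p ∧ ∀ j : ℤ, x (j + p) = x j) →
      ∀ j : ℤ, ‖x j‖ < ε)
    ↔
    (∀ ε > (0 : ℝ), ∃ δ > (0 : ℝ), ∀ x : ℤ → X,
      (∀ j : ℤ, ‖T (x j) - x (j + 1)‖ < δ) →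
      (∃ p : ℕ, 1 ≤ p ∧ ∀ j : ℤ, x (j + p) = x j) →
      (∃ j : ℤ, x j = 0) →
      ∀ j : ℤ, ‖x j‖ < ε) := by
  refine ⟨fun h ε hε => ?_, fun h ε hε => ?_⟩
  · obtain ⟨δ, hδ, hsmall⟩ := h ε hε
    exact ⟨δ, hδ, fun x hT hper _ => hsmall x hT hper⟩
  · obtain ⟨δ, hδ, hsmall⟩ := h ε hε
    refine ⟨δ, hδ, fun x hT ⟨p, hp, hx⟩ j => ?_⟩
    obtain ⟨y, hyT, hy, hy0, hxy⟩ := exists_periodic_pseudotrajectory_through_zero T hp hx hT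
    obtain ⟨i, hi⟩ := hxy j
    exact hi ▸ hsmall y hyT hy ⟨0, hy0⟩ i
end
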